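/- arXiv:2403.16661 — 5 statements merged into one kernel-verified Lean document; each statement's English description precedes it below -/
import Mathlib

section
/- The operator J₂ on 2-forms satisfies J₂ ∘ J₂ = 3·Id − 2·J₂; that is, for every 2-form β and all i,j: J₂(J₂(β))_{ij} = 3β_{ij} − 2J₂(β)_{ij}. Consequently the only possible eigenvalues of J₂ on 2-forms are −3 and 1. -/
namespace Spin7

noncomputable section

/-- Kronecker delta on `Fin 8`. -/
def kron (i j : Fin 8) : ℝ := if i = j then 1 else 0

/-- A 2-form: totally antisymmetric 2-tensor. -/
def Alt2 (β : Fin 8 → Fin 8 → ℝ) : Prop := ∀ i j, β i j = -β j i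

/-- A 3-form: totally antisymmetric 3-tensor. -/
def Alt3 (γ : Fin 8 → Fin 8 → Fin 8 → ℝ) : Prop :=
  ∀ i j k, γ i j k = -γ j i k ∧ γ i j k = -γ i k j

/-- A 4-form: totally antisymmetric 4-tensor. -/
def Alt4 (Φ : Fin 8 → Fin 8 → Fin 8 → Fin 8 → ℝ) : Prop :=
  ∀ i j k l, Φ i j k l = -Φ j i k l ∧ Φ i j k l = -Φ i k j l ∧ Φ i j k l = -Φ i j l k

/-- The Cayley contraction identity for a 4-form `Φ`. -/
def Cayley (Φ : Fin 8 → Fin 8 → Fin 8 → Fin 8 → ℝ) : Prop :=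
  ∀ i j k a b c : Fin 8,
    (∑ p, Φ i j k p * Φ a b c p) =
      kron i a * kron j b * kron k c + kron i b * kron j c * kron k a
        + kron i c * kron j a * kron k b
      - kron i a * kron j c * kron k b - kron i c * kron j b * kron k a
      - kron i b * kron j a * kron k c
      - kron i a * Φ j k b c - kron j a * Φ k i b c - kron k a * Φ i j b c
      - kron i b * Φ j k c a - kron j b * Φ k i c a - kron k b * Φ i j c a
      - kron i c * Φ j k a b - kron j c * Φ k i a b - kron k c * Φ i j a b

/-- The operator J₂ on 2-forms: `J₂(β)_{ij} = ½ Φ_{ijab} β_{ab}`. -/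
def J2 (Φ : Fin 8 → Fin 8 → Fin 8 → Fin 8 → ℝ) (β : Fin 8 → Fin 8 → ℝ) :
    Fin 8 → Fin 8 → ℝ :=
  fun i j => (1/2 : ℝ) * ∑ a, ∑ b, Φ i j a b * β a b

/-- π₇ = ¼(Id − J₂). -/
def pi7 (Φ : Fin 8 → Fin 8 → Fin 8 → Fin 8 → ℝ) (β : Fin 8 → Fin 8 → ℝ) :
    Fin 8 → Fin 8 → ℝ :=
  fun i j => (1/4 : ℝ) * (β i j - J2 Φ β i j)

/-- π₂₁ = ¼(3·Id + J₂). -/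
def pi21 (Φ : Fin 8 → Fin 8 → Fin 8 → Fin 8 → ℝ) (β : Fin 8 → Fin 8 → ℝ) :
    Fin 8 → Fin 8 → ℝ :=
  fun i j => (1/4 : ℝ) * (3 * β i j + J2 Φ β i j)

/-- The operator J₃ on 3-forms. -/
def J3 (Φ : Fin 8 → Fin 8 → Fin 8 → Fin 8 → ℝ) (γ : Fin 8 → Fin 8 → Fin 8 → ℝ) :
    Fin 8 → Fin 8 → Fin 8 → ℝ :=
  fun i j k => (1/2 : ℝ) *
    ∑ p, ∑ q, (Φ i j p q * γ k p q + Φ j k p q * γ i p q + Φ k i p q * γ j p q)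

/-- π₈ = (1/7)(Id − J₃). -/
def pi8 (Φ : Fin 8 → Fin 8 → Fin 8 → Fin 8 → ℝ) (γ : Fin 8 → Fin 8 → Fin 8 → ℝ) :
    Fin 8 → Fin 8 → Fin 8 → ℝ :=
  fun i j k => (1/7 : ℝ) * (γ i j k - J3 Φ γ i j k)

/-- π₄₈ = (6/7)(Id + (1/6)J₃). -/
def pi48 (Φ : Fin 8 → Fin 8 → Fin 8 → Fin 8 → ℝ) (γ : Fin 8 → Fin 8 → Fin 8 → ℝ) :
    Fin 8 → Fin 8 → Fin 8 → ℝ :=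
  fun i j k => (6/7 : ℝ) * (γ i j k + (1/6 : ℝ) * J3 Φ γ i j k)

/-- The operator J₄ on 4-forms. -/
def J4 (Φ σ : Fin 8 → Fin 8 → Fin 8 → Fin 8 → ℝ) :
    Fin 8 → Fin 8 → Fin 8 → Fin 8 → ℝ :=
  fun i j k l => (1/2 : ℝ) * ∑ p, ∑ q,
    (Φ i j p q * σ p q k l + Φ k i p q * σ p q j l + Φ i l p q * σ p q j k
      + Φ k l p q * σ p q i j + Φ j l p q * σ p q k i + Φ j k p q * σ p q i l)

/-- Antisymmetrization with weight 1/4! over four `Fin 8` indices. -/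
def asym4 (g : Fin 8 → Fin 8 → Fin 8 → Fin 8 → ℝ) (i j k l : Fin 8) : ℝ :=
  (1/24 : ℝ) * ∑ τ : Equiv.Perm (Fin 4),
    ((Equiv.Perm.sign τ : ℤ) : ℝ) *
      g (![i, j, k, l] (τ 0)) (![i, j, k, l] (τ 1)) (![i, j, k, l] (τ 2)) (![i, j, k, l] (τ 3))

/-- Simultaneous antisymmetrization (weight 1/4! each) over a lower group of four
indices and an upper group of four indices. -/
def asym44 (F : Fin 8 → Fin 8 → Fin 8 → Fin 8 → Fin 8 → Fin 8 → Fin 8 → Fin 8 → ℝ)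
    (i j k l a b c d : Fin 8) : ℝ :=
  asym4 (fun i' j' k' l' => asym4 (F i' j' k' l') a b c d) i j k l

/-- The projector π₂₇ on 4-forms. -/
def pi27 (Φ σ : Fin 8 → Fin 8 → Fin 8 → Fin 8 → ℝ) :
    Fin 8 → Fin 8 → Fin 8 → Fin 8 → ℝ :=
  fun i j k l => (3/32 : ℝ) *
    (asym4 (fun i' j' k' l' =>
        ∑ a, ∑ b, ∑ c, ∑ d, Φ i' j' a b * Φ k' l' c d * σ a b c d) i j k l
      - 4 * asym4 (fun i' j' k' l' => ∑ a, ∑ b, Φ i' j' a b * σ k' l' a b) i j k l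
      - (1/7 : ℝ) * Φ i j k l * (∑ a, ∑ b, ∑ c, ∑ d, Φ a b c d * σ a b c d)
      + 4 * σ i j k l)

/-- The map `K(H)_{ijkl} = H_{ip}Φ_{pjkl} − H_{jp}Φ_{pikl} + H_{kp}Φ_{pijl} − H_{lp}Φ_{pijk}`. -/
def Kmap (Φ : Fin 8 → Fin 8 → Fin 8 → Fin 8 → ℝ) (H : Fin 8 → Fin 8 → ℝ) :
    Fin 8 → Fin 8 → Fin 8 → Fin 8 → ℝ :=
  fun i j k l => ∑ p,
    (H i p * Φ p j k l - H j p * Φ p i k l + H k p * Φ p i j l - H l p * Φ p i j k)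

/-- The map `K'(σ)_{ij} = ½ Φ_{ipqr} σ_{jpqr} − ½ Φ_{jpqr} σ_{ipqr}`. -/
def Kprime (Φ σ : Fin 8 → Fin 8 → Fin 8 → Fin 8 → ℝ) : Fin 8 → Fin 8 → ℝ :=
  fun i j => (1/2 : ℝ) * ∑ p, ∑ q, ∑ r, (Φ i p q r * σ j p q r - Φ j p q r * σ i p q r)

/-- The totally antisymmetric Levi-Civita symbol on 8 indices with `ε_{12345678} = 1`. -/
def eps8 (v : Fin 8 → Fin 8) : ℝ :=
  Matrix.det (Matrix.of fun r c => if v r = c then (1 : ℝ) else 0)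

/-- Self-duality of the 4-form `Φ`. -/
def SelfDual (Φ : Fin 8 → Fin 8 → Fin 8 → Fin 8 → ℝ) : Prop :=
  ∀ i j k l, (1/24 : ℝ) *
    (∑ a, ∑ b, ∑ c, ∑ d, eps8 ![i, j, k, l, a, b, c, d] * Φ a b c d) = Φ i j k l

/-- Antisymmetrization with weight 1/5! over five `Fin 8` indices. -/
def asym5 (g : Fin 8 → Fin 8 → Fin 8 → Fin 8 → Fin 8 → ℝ) (a i j k l : Fin 8) : ℝ :=
  (1/120 : ℝ) * ∑ τ : Equiv.Perm (Fin 5),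
    ((Equiv.Perm.sign τ : ℤ) : ℝ) *
      g (![a, i, j, k, l] (τ 0)) (![a, i, j, k, l] (τ 1)) (![a, i, j, k, l] (τ 2))
        (![a, i, j, k, l] (τ 3)) (![a, i, j, k, l] (τ 4))

theorem key (Φ : Fin 8 → Fin 8 → Fin 8 → Fin 8 → ℝ) (hΦ : Alt4 Φ) (hC : Cayley Φ)
    (i j a b : Fin 8) :
    (∑ k, ∑ p, Φ i j k p * Φ a b k p) =
      6 * kron i a * kron j b - 6 * kron i b * kron j a - 4 * Φ i j a b := by
  have hz34 : ∀ x y z, Φ x y z z = 0 := by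
    intro x y z; have := (hΦ x y z z).2.2; linarith
  have hz24 : ∀ x z y, Φ x z y z = 0 := by
    intro x z y
    have h := (hΦ x z y z).2.1
    rw [hz34] at h; linarith
  have hz23 : ∀ x z y, Φ x z z y = 0 := by
    intro x z y
    have h := (hΦ x z z y).2.2
    have := hz24 x z y; linarith
  have hz14 : ∀ z x y, Φ z x y z = 0 := by
    intro z x y
    have h := (hΦ z x y z).1
    have := hz24 x z y
    have h2 := (hΦ x z y z).1
    linarith
  have hz13 : ∀ z x y, Φ z x z y = 0 := by
    intro z x y
    have h := (hΦ z x z y).2.1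
    have h3 := (hΦ z z x y).1
    linarith
  rw [Finset.sum_congr rfl fun k _ => hC i j k a b k]
  simp only [hz34, hz24, hz23, hz14, hz13, mul_zero, sub_zero, kron]
  simp only [mul_ite, ite_mul, mul_one, one_mul, mul_zero, zero_mul,
    Finset.sum_sub_distrib, Finset.sum_add_distrib, Finset.sum_ite_eq,
    Finset.sum_ite_eq', Finset.mem_univ, if_true, Finset.sum_const,
    Finset.card_univ, Fintype.card_fin, nsmul_eq_mul]
  have e1 : Φ i j b a = -Φ i j a b := by have := (hΦ i j a b).2.2; linarith
  have e2 : Φ j i a b = -Φ i j a b := by have := (hΦ j i a b).1; linarith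
  split_ifs <;> subst_vars <;> simp_all <;> ring_nf

lemma swap4 (f : Fin 8 → Fin 8 → Fin 8 → Fin 8 → ℝ) :
    ∑ a, ∑ b, ∑ c, ∑ d, f a b c d = ∑ c, ∑ d, ∑ a, ∑ b, f a b c d := by
  have h1 : ∀ a, (∑ b, ∑ c, ∑ d, f a b c d) = ∑ c, ∑ d, ∑ b, f a b c d := by
    intro a
    rw [Finset.sum_comm]
    exact Finset.sum_congr rfl fun c _ => Finset.sum_comm
  simp_rw [h1]
  rw [Finset.sum_comm]
  exact Finset.sum_congr rfl fun c _ => Finset.sum_comm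

lemma pairswap (Φ : Fin 8 → Fin 8 → Fin 8 → Fin 8 → ℝ) (hΦ : Alt4 Φ)
    (a b c d : Fin 8) : Φ a b c d = Φ c d a b := by
  have h1 := (hΦ a b c d).2.1   -- = -Φ a c b d
  have h2 := (hΦ a c b d).1     -- = -Φ c a b d
  have h3 := (hΦ c a b d).2.2   -- = -Φ c a d b
  have h4 := (hΦ c a d b).2.1   -- = -Φ c d a b
  linarith


/-- `J₂ ∘ J₂ = 3·Id − 2·J₂` on 2-forms; consequently the only possible
eigenvalues of J₂ on 2-forms are −3 and 1. -/
theorem J2_squared (Φ : Fin 8 → Fin 8 → Fin 8 → Fin 8 → ℝ)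
    (hΦ : Alt4 Φ) (hCayley : Cayley Φ) :
    (∀ β : Fin 8 → Fin 8 → ℝ, Alt2 β →
      ∀ i j, J2 Φ (J2 Φ β) i j = 3 * β i j - 2 * J2 Φ β i j) ∧
    (∀ (c : ℝ) (β : Fin 8 → Fin 8 → ℝ), Alt2 β → β ≠ 0 →
      (∀ i j, J2 Φ β i j = c * β i j) → c = -3 ∨ c = 1) := by
  have main : ∀ β : Fin 8 → Fin 8 → ℝ, Alt2 β →
      ∀ i j, J2 Φ (J2 Φ β) i j = 3 * β i j - 2 * J2 Φ β i j := by
    intro β hβ i j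
    have L : J2 Φ (J2 Φ β) i j =
        (1/4 : ℝ) * ∑ c, ∑ d, (∑ a, ∑ b, Φ i j a b * Φ c d a b) * β c d := by
      simp only [J2]
      rw [show (∑ a, ∑ b, Φ i j a b * ((1/2:ℝ) * ∑ c, ∑ d, Φ a b c d * β c d))
          = (1/2:ℝ) * ∑ a, ∑ b, ∑ c, ∑ d, Φ i j a b * Φ a b c d * β c d by
        simp only [Finset.mul_sum]
        exact Finset.sum_congr rfl fun a _ => Finset.sum_congr rfl fun b _ =>
          Finset.sum_congr rfl fun c _ => Finset.sum_congr rfl fun d _ => by ring]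
      rw [swap4 (fun a b c d => Φ i j a b * Φ a b c d * β c d)]
      rw [show (∑ c, ∑ d, ∑ a, ∑ b, Φ i j a b * Φ a b c d * β c d)
          = ∑ c, ∑ d, (∑ a, ∑ b, Φ i j a b * Φ c d a b) * β c d by
        refine Finset.sum_congr rfl fun c _ => Finset.sum_congr rfl fun d _ => ?_
        rw [Finset.sum_mul]
        refine Finset.sum_congr rfl fun a _ => ?_
        rw [Finset.sum_mul]
        refine Finset.sum_congr rfl fun b _ => ?_
        rw [pairswap Φ hΦ a b c d]]
      ring
    rw [L]
    rw [Finset.sum_congr rfl fun c _ => Finset.sum_congr rfl fun d _ => by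
      rw [key Φ hΦ hCayley i j c d]]
    have e : ∀ c d : Fin 8,
        (6 * kron i c * kron j d - 6 * kron i d * kron j c - 4 * Φ i j c d) * β c d
        = 6 * (kron i c * (kron j d * β c d)) - 6 * (kron j c * (kron i d * β c d))
            - 4 * (Φ i j c d * β c d) := by
      intro c d
      simp only [kron]
      split_ifs <;> ring
    simp_rw [e, Finset.sum_sub_distrib, ← Finset.mul_sum]
    have A : (∑ c, kron i c * ∑ d, kron j d * β c d) = β i j := by
      simp [kron, ite_mul, Finset.sum_ite_eq]
    have B : (∑ c, kron j c * ∑ d, kron i d * β c d) = β j i := by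
      simp [kron, ite_mul, Finset.sum_ite_eq]
    rw [A, B]
    simp only [J2]
    have := hβ j i
    ring_nf
    linarith
  refine ⟨main, ?_⟩
  intro c β hβ hne heig
  obtain ⟨i, hi⟩ : ∃ i, β i ≠ 0 := Function.ne_iff.mp hne
  obtain ⟨j, hij⟩ : ∃ j, β i j ≠ 0 := Function.ne_iff.mp hi
  have h1 : J2 Φ (J2 Φ β) i j = c * c * β i j := by
    have hfun : J2 Φ β = fun a b => c * β a b := funext fun a => funext fun b => heig a b
    have step : J2 Φ (J2 Φ β) i j = c * J2 Φ β i j := by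
      conv_lhs => rw [hfun]
      simp only [J2, Finset.mul_sum]
      exact Finset.sum_congr rfl fun a _ => Finset.sum_congr rfl fun b _ => by ring
    rw [step, heig i j]; ring
  have h2 := main β hβ i j
  rw [h1, heig i j] at h2
  have hfac : (c + 3) * (c - 1) * β i j = 0 := by nlinarith [h2]
  rcases mul_eq_zero.mp hfac with h | h
  · rcases mul_eq_zero.mp h with h | h
    · left; linarith
    · right; linarith
  · exact absurd h hij


end

end Spin7
end

section
/- The operator J₂ on 2-forms is invertible with inverse (1/3)(2·Id + J₂); that is, J₂ ∘ (1/3)(2·Id + J₂) = Id = (1/3)(2·Id + J₂) ∘ J₂ on 2-forms. -/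
namespace Spin7

noncomputable section

lemma contract (Φ : Fin 8 → Fin 8 → Fin 8 → Fin 8 → ℝ) (hΦ : Alt4 Φ) (hC : Cayley Φ)
    (i j k l : Fin 8) :
    ∑ a : Fin 8, ∑ p : Fin 8, Φ i j a p * Φ k l a p
      = 6 * kron i k * kron j l - 6 * kron i l * kron j k - 4 * Φ i j k l := by
  have h23 : ∀ w x y z, Φ w x y z = -Φ w y x z := fun w x y z => (hΦ w x y z).2.1
  have h34 : ∀ w x y z, Φ w x y z = -Φ w x z y := fun w x y z => (hΦ w x y z).2.2
  have h12 : ∀ w x y z, Φ w x y z = -Φ x w y z := fun w x y z => (hΦ w x y z).1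
  have hz23 : ∀ w x z : Fin 8, Φ w x x z = 0 := by
    intro w x z; have := h23 w x x z; linarith
  have h0 : ∀ w x y : Fin 8, Φ w x y x = 0 := by
    intro w x y; rw [h34 w x y x, hz23]; ring
  have h0' : ∀ x w z : Fin 8, Φ x w x z = 0 := by
    intro x w z; rw [h12 x w x z, hz23]; ring
  rw [Finset.sum_congr rfl (fun a _ => hC i j a k l a)]
  simp only [kron, h0, h0', mul_ite, ite_mul, mul_one, mul_zero, one_mul, zero_mul,
    Finset.sum_add_distrib, Finset.sum_sub_distrib, Finset.sum_ite_eq, Finset.sum_ite_eq',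
    Finset.mem_univ, if_true, Finset.sum_const, Finset.card_univ, Fintype.card_fin,
    nsmul_eq_mul, Nat.cast_ofNat, Finset.sum_ite_irrel, Finset.sum_const_zero]
  have z1 : ∀ x : Fin 8, Φ x i l x = 0 := by
    intro x; rw [h12 x i l x, h0]; ring
  have z2 : ∀ x : Fin 8, Φ j x x k = 0 := fun x => hz23 j x k
  have e1 : Φ i j l k = -Φ i j k l := by have := h34 i j k l; linarith
  have e2 : Φ j i k l = -Φ i j k l := by have := h12 i j k l; linarith
  simp only [z1, z2, Finset.sum_const_zero, e1, e2, ite_self]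
  split_ifs <;> ring


lemma comm4 (f : Fin 8 → Fin 8 → Fin 8 → Fin 8 → ℝ) :
    (∑ a : Fin 8, ∑ b : Fin 8, ∑ c : Fin 8, ∑ d : Fin 8, f a b c d)
      = ∑ c : Fin 8, ∑ d : Fin 8, ∑ a : Fin 8, ∑ b : Fin 8, f a b c d := by
  calc (∑ a : Fin 8, ∑ b : Fin 8, ∑ c : Fin 8, ∑ d : Fin 8, f a b c d)
      = ∑ a : Fin 8, ∑ c : Fin 8, ∑ b : Fin 8, ∑ d : Fin 8, f a b c d :=
        Finset.sum_congr rfl fun a _ => Finset.sum_comm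
    _ = ∑ c : Fin 8, ∑ a : Fin 8, ∑ b : Fin 8, ∑ d : Fin 8, f a b c d := Finset.sum_comm
    _ = ∑ c : Fin 8, ∑ a : Fin 8, ∑ d : Fin 8, ∑ b : Fin 8, f a b c d :=
        Finset.sum_congr rfl fun c _ => Finset.sum_congr rfl fun a _ => Finset.sum_comm
    _ = ∑ c : Fin 8, ∑ d : Fin 8, ∑ a : Fin 8, ∑ b : Fin 8, f a b c d :=
        Finset.sum_congr rfl fun c _ => Finset.sum_comm

lemma J2J2 (Φ : Fin 8 → Fin 8 → Fin 8 → Fin 8 → ℝ) (hΦ : Alt4 Φ) (hC : Cayley Φ)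
    (β : Fin 8 → Fin 8 → ℝ) (hβ : Alt2 β) (i j : Fin 8) :
    J2 Φ (J2 Φ β) i j = 3 * β i j - 2 * J2 Φ β i j := by
  have h23 : ∀ w x y z, Φ w x y z = -Φ w y x z := fun w x y z => (hΦ w x y z).2.1
  have h34 : ∀ w x y z, Φ w x y z = -Φ w x z y := fun w x y z => (hΦ w x y z).2.2
  have h12 : ∀ w x y z, Φ w x y z = -Φ x w y z := fun w x y z => (hΦ w x y z).1
  have pair : ∀ a b c d, Φ a b c d = Φ c d a b := by
    intro a b c d
    rw [h23 a b c d, h12 a c b d, h34 c a b d, h23 c a d b]; ring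
  have key : ∀ c d, (∑ a : Fin 8, ∑ b : Fin 8, Φ i j a b * Φ c d a b)
      = 6 * kron i c * kron j d - 6 * kron i d * kron j c - 4 * Φ i j c d :=
    fun c d => contract Φ hΦ hC i j c d
  have main : (∑ a : Fin 8, ∑ b : Fin 8, Φ i j a b * J2 Φ β a b)
      = 6 * β i j - 4 * J2 Φ β i j := by
    have step1 : (∑ a : Fin 8, ∑ b : Fin 8, Φ i j a b * J2 Φ β a b)
        = ∑ a : Fin 8, ∑ b : Fin 8, ∑ c : Fin 8, ∑ d : Fin 8,
            (1/2 : ℝ) * (Φ i j a b * Φ c d a b * β c d) := by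
      refine Finset.sum_congr rfl fun a _ => Finset.sum_congr rfl fun b _ => ?_
      show Φ i j a b * ((1/2 : ℝ) * ∑ c, ∑ d, Φ a b c d * β c d) = _
      simp only [Finset.mul_sum]
      refine Finset.sum_congr rfl fun c _ => Finset.sum_congr rfl fun d _ => ?_
      rw [pair a b c d]; ring
    rw [step1, comm4]
    have step2 : ∀ c d : Fin 8, (∑ a : Fin 8, ∑ b : Fin 8,
        (1/2 : ℝ) * (Φ i j a b * Φ c d a b * β c d))
        = (1/2 : ℝ) * ((6 * kron i c * kron j d - 6 * kron i d * kron j c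
            - 4 * Φ i j c d) * β c d) := by
      intro c d
      rw [← key c d]
      simp only [Finset.sum_mul, Finset.mul_sum]
    rw [Finset.sum_congr rfl fun c _ => Finset.sum_congr rfl fun d _ => step2 c d]
    have ssplit : (∑ c : Fin 8, ∑ d : Fin 8, (1/2 : ℝ) * ((6 * kron i c * kron j d
          - 6 * kron i d * kron j c - 4 * Φ i j c d) * β c d))
        = 3 * (∑ c : Fin 8, ∑ d : Fin 8, kron i c * (kron j d * β c d))
          - 3 * (∑ c : Fin 8, ∑ d : Fin 8, kron i d * (kron j c * β c d))
          - 2 * (∑ c : Fin 8, ∑ d : Fin 8, Φ i j c d * β c d) := by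
      simp only [Finset.mul_sum]
      rw [← Finset.sum_sub_distrib, ← Finset.sum_sub_distrib]
      refine Finset.sum_congr rfl fun c _ => ?_
      rw [← Finset.sum_sub_distrib, ← Finset.sum_sub_distrib]
      refine Finset.sum_congr rfl fun d _ => ?_
      ring
    rw [ssplit]
    have k1 : (∑ c : Fin 8, ∑ d : Fin 8, kron i c * (kron j d * β c d)) = β i j := by
      simp [kron, ite_mul, one_mul, zero_mul, Finset.sum_ite_eq]
    have k2 : (∑ c : Fin 8, ∑ d : Fin 8, kron i d * (kron j c * β c d)) = β j i := by
      simp [kron, ite_mul, mul_ite, one_mul, zero_mul, mul_zero, mul_one,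
        Finset.sum_ite_eq, Finset.sum_ite_eq', Finset.sum_ite_irrel, Finset.sum_const_zero]
    have e1 : J2 Φ β i j = (1/2 : ℝ) * (∑ c, ∑ d, Φ i j c d * β c d) := rfl
    rw [k1, k2, hβ j i]
    linarith [e1]
  show (1/2 : ℝ) * (∑ a, ∑ b, Φ i j a b * J2 Φ β a b) = _
  rw [main]; ring

/-- J₂ is invertible on 2-forms with inverse `(1/3)(2·Id + J₂)`. -/
theorem J2_inverse (Φ : Fin 8 → Fin 8 → Fin 8 → Fin 8 → ℝ)
    (hΦ : Alt4 Φ) (hCayley : Cayley Φ) :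
    ∀ β : Fin 8 → Fin 8 → ℝ, Alt2 β → ∀ i j,
      J2 Φ (fun a b => (1/3 : ℝ) * (2 * β a b + J2 Φ β a b)) i j = β i j ∧
      (1/3 : ℝ) * (2 * J2 Φ β i j + J2 Φ (J2 Φ β) i j) = β i j := by
  intro β hβ i j
  have h := J2J2 Φ hΦ hCayley β hβ i j
  constructor
  · show (1/2 : ℝ) * (∑ a, ∑ b, Φ i j a b * ((1/3 : ℝ) * (2 * β a b + J2 Φ β a b))) = β i j
    have lin : (∑ a : Fin 8, ∑ b : Fin 8, Φ i j a b * ((1/3 : ℝ) * (2 * β a b + J2 Φ β a b)))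
        = (2/3 : ℝ) * (∑ a : Fin 8, ∑ b : Fin 8, Φ i j a b * β a b)
          + (1/3 : ℝ) * (∑ a : Fin 8, ∑ b : Fin 8, Φ i j a b * J2 Φ β a b) := by
      rw [Finset.mul_sum, Finset.mul_sum, ← Finset.sum_add_distrib]
      refine Finset.sum_congr rfl fun a _ => ?_
      rw [Finset.mul_sum, Finset.mul_sum, ← Finset.sum_add_distrib]
      refine Finset.sum_congr rfl fun b _ => ?_
      ring
    rw [lin]
    have e1 : J2 Φ β i j = (1/2 : ℝ) * (∑ a, ∑ b, Φ i j a b * β a b) := rfl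
    have e2 : J2 Φ (J2 Φ β) i j = (1/2 : ℝ) * (∑ a, ∑ b, Φ i j a b * J2 Φ β a b) := rfl
    rw [e1, e2] at h
    linarith
  · linarith
end
end Spin7
end

section
/- The operator J₃ on 3-forms satisfies J₃ ∘ J₃ = 6·Id − 5·J₃; that is, for every 3-form γ and all i,j,k: J₃(J₃(γ))_{ijk} = 6γ_{ijk} − 5J₃(γ)_{ijk}. Consequently the only possible eigenvalues of J₃ on 3-forms are −6 and 1. -/
namespace Spin7

noncomputable section

-- ===== auxiliary lemmas =====
lemma ite_eq_kron (a b : Fin 8) (x : ℝ) : (if a = b then x else 0) = kron a b * x := by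
  simp [kron, ite_mul]



-- swap helpers
section
variable (Φ : Fin 8 → Fin 8 → Fin 8 → Fin 8 → ℝ) (hΦ : Alt4 Φ)
include hΦ
lemma sw24 : ∀ a b c d, Φ a b c d = -Φ a d c b := fun a b c d => by
  rw [(hΦ a b c d).2.1, (hΦ a c b d).2.2, (hΦ a c d b).2.1]; ring
lemma sw13 : ∀ a b c d, Φ a b c d = -Φ c b a d := fun a b c d => by
  rw [(hΦ a b c d).1, (hΦ b a c d).2.1, (hΦ b c a d).1]; ring
lemma cyc : ∀ a b c d, Φ a b c d = -Φ b c d a := fun a b c d => by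
  rw [(hΦ a b c d).1, (hΦ b a c d).2.1, (hΦ b c a d).2.2]; ring
lemma sw14 : ∀ a b c d, Φ a b c d = -Φ d b c a := fun a b c d => by
  rw [cyc Φ hΦ a b c d, cyc Φ hΦ b c d a, cyc Φ hΦ c d a b,
    (hΦ d a b c).2.1, (hΦ d b a c).2.2]; ring
end

lemma sum4_comm (F : Fin 8 → Fin 8 → Fin 8 → Fin 8 → ℝ) :
    ∑ p, ∑ q, ∑ r, ∑ s, F p q r s = ∑ q, ∑ r, ∑ s, ∑ p, F p q r s := by
  rw [Finset.sum_comm]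
  exact Finset.sum_congr rfl fun q _ => by
    rw [Finset.sum_comm]
    exact Finset.sum_congr rfl fun r _ => Finset.sum_comm


lemma L1 (Φ : Fin 8 → Fin 8 → Fin 8 → Fin 8 → ℝ) (γ : Fin 8 → Fin 8 → Fin 8 → ℝ)
    (hΦ : Alt4 Φ) (hγ : Alt3 γ) (hC : Cayley Φ) (i j k : Fin 8) :
    ∑ p, ∑ q, ∑ r, ∑ s, Φ i j p q * (Φ k p r s * γ q r s)
    = -2 * γ i j k + kron i k * (∑ q, ∑ r, ∑ s, Φ j q r s * γ q r s)
      - kron j k * (∑ q, ∑ r, ∑ s, Φ i q r s * γ q r s)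
      + (∑ r, ∑ s, Φ i j r s * γ k r s)
      - 2 * (∑ r, ∑ s, Φ j k r s * γ i r s)
      - 2 * (∑ r, ∑ s, Φ k i r s * γ j r s) := by
  unfold Cayley at hC
  rw [sum4_comm]
  have hpt : ∀ q r s : Fin 8, (∑ p, Φ i j p q * (Φ k p r s * γ q r s))
      = (∑ p, Φ i j q p * Φ k r s p) * -γ q r s := by
    intro q r s
    rw [Finset.sum_mul]
    refine Finset.sum_congr rfl fun p _ => ?_
    rw [(hΦ i j p q).2.2, (hΦ k p r s).2.1, (hΦ k r p s).2.2]; ring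
  simp only [hpt, hC]
  simp only [sub_mul, add_mul, neg_mul, mul_neg, neg_neg, mul_assoc,
    Finset.sum_sub_distrib, Finset.sum_add_distrib, Finset.sum_neg_distrib,
    kron, ite_mul, mul_ite, mul_one, mul_zero, one_mul, zero_mul,
    Finset.sum_ite_eq, Finset.sum_ite_eq', Finset.mem_univ, if_true,
    Finset.sum_ite_irrel, Finset.sum_const_zero, ite_self]
  -- traces
  have tr1 : ∀ m : Fin 8, (∑ x : Fin 8, γ x m x) = 0 := by
    intro m; apply Finset.sum_eq_zero; intro x _
    linarith [(hγ x m x).2, (hγ x x m).1]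
  have tr2 : ∀ m : Fin 8, (∑ x : Fin 8, γ x x m) = 0 := by
    intro m; apply Finset.sum_eq_zero; intro x _
    linarith [(hγ x x m).1]
  have eC : (∑ x : Fin 8, ∑ y : Fin 8, ∑ z : Fin 8, Φ x i y z * γ x y z)
      = -∑ q, ∑ r, ∑ s, Φ i q r s * γ q r s := by
    have h : ∀ x y z : Fin 8, Φ x i y z * γ x y z = -(Φ i x y z * γ x y z) := by
      intro x y z; rw [(hΦ x i y z).1]; ring
    simp only [h, Finset.sum_neg_distrib]
  have e2 : (∑ x : Fin 8, ∑ y : Fin 8, Φ j x y k * γ x i y)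
      = -∑ r, ∑ s, Φ j k r s * γ i r s := by
    have h : ∀ x y : Fin 8, Φ j x y k * γ x i y = -(Φ j k x y * γ i x y) := by
      intro x y
      rw [(hΦ j x y k).2.2, (hΦ j x k y).2.1, (hγ x i y).1]; ring
    simp only [h, Finset.sum_neg_distrib]
  have e3 : (∑ x : Fin 8, ∑ y : Fin 8, Φ x i y k * γ x j y)
      = -∑ r, ∑ s, Φ k i r s * γ j r s := by
    have h : ∀ x y : Fin 8, Φ x i y k * γ x j y = -(Φ k i x y * γ j x y) := by
      intro x y
      rw [(hΦ x i y k).1, (hΦ i x y k).2.2, (hΦ i x k y).2.1, (hΦ i k x y).1, (hγ x j y).1]; ring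
    simp only [h, Finset.sum_neg_distrib]
  have e4 : (∑ x : Fin 8, ∑ y : Fin 8, Φ i j y k * γ x x y) = 0 := by
    apply Finset.sum_eq_zero; intro x _
    apply Finset.sum_eq_zero; intro y _
    have : γ x x y = 0 := by linarith [(hγ x x y).1]
    rw [this, mul_zero]
  have e5 : (∑ x : Fin 8, ∑ y : Fin 8, Φ j x k y * γ x y i)
      = -∑ r, ∑ s, Φ j k r s * γ i r s := by
    have h : ∀ x y : Fin 8, Φ j x k y * γ x y i = -(Φ j k x y * γ i x y) := by
      intro x y
      rw [(hΦ j x k y).2.1, (hγ x y i).2, (hγ x i y).1]; ring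
    simp only [h, Finset.sum_neg_distrib]
  have e6 : (∑ x : Fin 8, ∑ y : Fin 8, Φ x i k y * γ x y j)
      = -∑ r, ∑ s, Φ k i r s * γ j r s := by
    have h : ∀ x y : Fin 8, Φ x i k y * γ x y j = -(Φ k i x y * γ j x y) := by
      intro x y
      rw [(hΦ x i k y).1, (hΦ i x k y).2.1, (hΦ i k x y).1, (hγ x y j).2, (hγ x j y).1]; ring
    simp only [h, Finset.sum_neg_distrib]
  have e7 : (∑ x : Fin 8, ∑ y : Fin 8, Φ i j k y * γ x y x) = 0 := by
    apply Finset.sum_eq_zero; intro x _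
    apply Finset.sum_eq_zero; intro y _
    have : γ x y x = 0 := by linarith [(hγ x y x).2, (hγ x x y).1]
    rw [this, mul_zero]
  have g1 : γ k i j = γ i j k := by
    rw [(hγ k i j).1, (hγ i k j).2]; ring
  have g2 : γ k j i = -γ i j k := by
    rw [(hγ k j i).1, (hγ j k i).2, (hγ j i k).1]; ring
  rw [tr1 j, tr1 i, tr2 i, tr2 j, eC, e2, e3, e4, e5, e6, e7, g1, g2]
  simp only [ite_eq_kron]
  ring


lemma L2 (Φ : Fin 8 → Fin 8 → Fin 8 → Fin 8 → ℝ) (γ : Fin 8 → Fin 8 → Fin 8 → ℝ)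
    (hΦ : Alt4 Φ) (hγ : Alt3 γ) (hC : Cayley Φ) (i j k : Fin 8) :
    ∑ p, ∑ q, ∑ r, ∑ s, Φ i j p q * (Φ p q r s * γ k r s)
    = 12 * γ i j k - 4 * ∑ r, ∑ s, Φ i j r s * γ k r s := by
  unfold Cayley at hC
  have inner : ∀ r s : Fin 8, (∑ p, ∑ q, Φ i j p q * Φ p q r s)
      = 6 * (kron i r * kron j s) - 6 * (kron i s * kron j r) - 4 * Φ i j r s := by
    intro r s
    rw [Finset.sum_comm]
    have hpt : ∀ q : Fin 8, (∑ p, Φ i j p q * Φ p q r s) = ∑ p, Φ i j q p * Φ r s q p := by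
      intro q
      refine Finset.sum_congr rfl fun p _ => ?_
      rw [(hΦ i j p q).2.2, (hΦ p q r s).2.1, (hΦ p r q s).1, (hΦ r p q s).2.2,
        (hΦ r p s q).2.1, (hΦ r s p q).2.2]
      ring
    simp only [hpt, hC]
    simp only [Finset.sum_sub_distrib, Finset.sum_add_distrib,
      kron, ite_mul, mul_ite, mul_one, mul_zero, one_mul, zero_mul,
      Finset.sum_ite_eq, Finset.sum_ite_eq', Finset.mem_univ, if_true, if_pos,
      Finset.sum_ite_irrel, Finset.sum_const_zero, ite_self,
      Finset.sum_const, Finset.card_univ, Fintype.card_fin, nsmul_eq_mul]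
    have t1 : (∑ x : Fin 8, Φ j x s x) = 0 :=
      Finset.sum_eq_zero fun x _ => by linarith [sw24 Φ hΦ j x s x]
    have t2 : (∑ x : Fin 8, Φ x i s x) = 0 :=
      Finset.sum_eq_zero fun x _ => by linarith [sw14 Φ hΦ x i s x]
    have t3 : (∑ x : Fin 8, Φ j x x r) = 0 :=
      Finset.sum_eq_zero fun x _ => by linarith [(hΦ j x x r).2.1]
    have t4 : (∑ x : Fin 8, Φ x i x r) = 0 :=
      Finset.sum_eq_zero fun x _ => by linarith [sw13 Φ hΦ x i x r]
    rw [t1, t2, t3, t4, (hΦ i j s r).2.2, (hΦ j i r s).1]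
    split_ifs <;> (push_cast; ring)
  rw [sum4_comm, sum4_comm]
  have h2 : ∀ r s : Fin 8, (∑ p, ∑ q, Φ i j p q * (Φ p q r s * γ k r s))
      = (6 * (kron i r * kron j s) - 6 * (kron i s * kron j r) - 4 * Φ i j r s)
        * γ k r s := by
    intro r s
    rw [← inner r s, Finset.sum_mul]
    refine Finset.sum_congr rfl fun p _ => ?_
    rw [Finset.sum_mul]
    exact Finset.sum_congr rfl fun q _ => by ring
  simp only [h2]
  simp only [sub_mul, add_mul, mul_assoc,
    kron, ite_mul, mul_ite, mul_one, mul_zero, one_mul, zero_mul,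
    Finset.sum_sub_distrib, Finset.sum_add_distrib,
    Finset.sum_ite_eq, Finset.sum_ite_eq', Finset.mem_univ, if_true,
    Finset.sum_ite_irrel, Finset.sum_const_zero, ite_self]
  rw [show (∑ x : Fin 8, ∑ y : Fin 8, 4 * (Φ i j x y * γ k x y))
      = 4 * ∑ r, ∑ s, Φ i j r s * γ k r s from by simp only [← Finset.mul_sum]]
  rw [show γ k i j = γ i j k from by rw [(hγ k i j).1, (hγ i k j).2]; ring,
    show γ k j i = -γ i j k from by rw [(hγ k j i).1, (hγ j k i).2, (hγ j i k).1]; ring]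
  ring


lemma mul_sum2 (c : ℝ) (f : Fin 8 → Fin 8 → ℝ) :
    c * ∑ p, ∑ q, f p q = ∑ p, ∑ q, c * f p q := by
  rw [Finset.mul_sum]
  exact Finset.sum_congr rfl fun p _ => Finset.mul_sum _ _ _

lemma L3 (Φ : Fin 8 → Fin 8 → Fin 8 → Fin 8 → ℝ) (γ : Fin 8 → Fin 8 → Fin 8 → ℝ)
    (hΦ : Alt4 Φ) (i j k : Fin 8) :
    ∑ p, ∑ q, ∑ r, ∑ s, Φ i j p q * (Φ q k r s * γ p r s)
    = ∑ p, ∑ q, ∑ r, ∑ s, Φ i j p q * (Φ k p r s * γ q r s) := by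
  rw [Finset.sum_comm]
  refine Finset.sum_congr rfl fun a _ => Finset.sum_congr rfl fun b _ =>
    Finset.sum_congr rfl fun r _ => Finset.sum_congr rfl fun s _ => ?_
  rw [(hΦ i j b a).2.2, (hΦ a k r s).1]; ring

/-- `J₃ ∘ J₃ = 6·Id − 5·J₃` on 3-forms; consequently the only possible
eigenvalues of J₃ on 3-forms are −6 and 1. -/
theorem J3_squared (Φ : Fin 8 → Fin 8 → Fin 8 → Fin 8 → ℝ)
    (hΦ : Alt4 Φ) (hCayley : Cayley Φ) :
    (∀ γ : Fin 8 → Fin 8 → Fin 8 → ℝ, Alt3 γ →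
      ∀ i j k, J3 Φ (J3 Φ γ) i j k = 6 * γ i j k - 5 * J3 Φ γ i j k) ∧
    (∀ (c : ℝ) (γ : Fin 8 → Fin 8 → Fin 8 → ℝ), Alt3 γ → γ ≠ 0 →
      (∀ i j k, J3 Φ γ i j k = c * γ i j k) → c = -6 ∨ c = 1) := by
  have part1 : ∀ γ : Fin 8 → Fin 8 → Fin 8 → ℝ, Alt3 γ →
      ∀ i j k, J3 Φ (J3 Φ γ) i j k = 6 * γ i j k - 5 * J3 Φ γ i j k := by
    intro γ hγ i j k
    have hks : ∀ a b : Fin 8, kron a b = kron b a := by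
      intro a b; simp [kron]; split_ifs with h1 h2 <;> simp_all [eq_comm]
    calc J3 Φ (J3 Φ γ) i j k
        = (1/2 : ℝ) * ∑ p, ∑ q, ((1/2 : ℝ) * ∑ r, ∑ s,
            (Φ i j p q * (Φ k p r s * γ q r s + Φ p q r s * γ k r s + Φ q k r s * γ p r s)
            + Φ j k p q * (Φ i p r s * γ q r s + Φ p q r s * γ i r s + Φ q i r s * γ p r s)
            + Φ k i p q * (Φ j p r s * γ q r s + Φ p q r s * γ j r s + Φ q j r s * γ p r s))) := by
          simp only [J3]
          congr 1
          refine Finset.sum_congr rfl fun p _ => Finset.sum_congr rfl fun q _ => ?_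
          simp only [Finset.sum_add_distrib, ← Finset.mul_sum]
          ring
      _ = (1/4 : ℝ) * ∑ p, ∑ q, ∑ r, ∑ s,
            (Φ i j p q * (Φ k p r s * γ q r s + Φ p q r s * γ k r s + Φ q k r s * γ p r s)
            + Φ j k p q * (Φ i p r s * γ q r s + Φ p q r s * γ i r s + Φ q i r s * γ p r s)
            + Φ k i p q * (Φ j p r s * γ q r s + Φ p q r s * γ j r s + Φ q j r s * γ p r s)) := by
          rw [← mul_sum2]; ring
      _ = 6 * γ i j k - 5 * J3 Φ γ i j k := by
          simp only [mul_add, Finset.sum_add_distrib]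
          rw [L3 Φ γ hΦ i j k, L3 Φ γ hΦ j k i, L3 Φ γ hΦ k i j,
            L1 Φ γ hΦ hγ hCayley i j k, L1 Φ γ hΦ hγ hCayley j k i,
            L1 Φ γ hΦ hγ hCayley k i j,
            L2 Φ γ hΦ hγ hCayley i j k, L2 Φ γ hΦ hγ hCayley j k i,
            L2 Φ γ hΦ hγ hCayley k i j]
          simp only [J3, Finset.sum_add_distrib]
          rw [hks j i, hks k i, hks k j]
          rw [show γ j k i = γ i j k from by
              rw [(hγ j k i).2, (hγ j i k).1]; ring,
            show γ k i j = γ i j k from by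
              rw [(hγ k i j).1, (hγ i k j).2]; ring]
          ring
  refine ⟨part1, ?_⟩
  intro c γ hγ hne heig
  obtain ⟨i, j, k, hg⟩ : ∃ i j k, γ i j k ≠ 0 := by
    by_contra h
    push_neg at h
    exact hne (funext fun a => funext fun b => funext fun d => by simpa using h a b d)
  have hJfun : J3 Φ γ = fun a b d => c * γ a b d := by
    funext a b d; exact heig a b d
  have hlin : J3 Φ (J3 Φ γ) i j k = c * J3 Φ γ i j k := by
    conv_lhs => rw [hJfun]
    simp only [J3]
    rw [mul_left_comm c, mul_sum2 c]
    congr 1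
    exact Finset.sum_congr rfl fun p _ => Finset.sum_congr rfl fun q _ => by ring
  have e2 : c * (c * γ i j k) = 6 * γ i j k - 5 * (c * γ i j k) := by
    rw [← heig i j k, ← hlin, part1 γ hγ i j k, heig i j k]
  have e3 : (c * c + 5 * c - 6) * γ i j k = 0 := by linear_combination e2
  have e4 : c * c + 5 * c - 6 = 0 := by
    rcases mul_eq_zero.mp e3 with h | h
    · exact h
    · exact absurd h hg
  have e5 : (c + 6) * (c - 1) = 0 := by linear_combination e4
  rcases mul_eq_zero.mp e5 with h | h
  · left; linarith
  · right; linarith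
end
end Spin7
end

section
/- The operator J₃ on 3-forms is invertible with inverse (1/6)(J₃ + 5·Id); that is, J₃ ∘ (1/6)(J₃ + 5·Id) = Id = (1/6)(J₃ + 5·Id) ∘ J₃ on 3-forms. -/
namespace Spin7

noncomputable section

section helpers
variable {Φ : Fin 8 → Fin 8 → Fin 8 → Fin 8 → ℝ} {γ : Fin 8 → Fin 8 → Fin 8 → ℝ}

lemma p12 (h : Alt4 Φ) (a b c d) : Φ a b c d = -Φ b a c d := (h a b c d).1
lemma p23 (h : Alt4 Φ) (a b c d) : Φ a b c d = -Φ a c b d := (h a b c d).2.1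
lemma p34 (h : Alt4 Φ) (a b c d) : Φ a b c d = -Φ a b d c := (h a b c d).2.2
lemma p13 (h : Alt4 Φ) (a b c d) : Φ a b c d = -Φ c b a d := by
  rw [p12 h, p23 h, p12 h]; ring
lemma p24 (h : Alt4 Φ) (a b c d) : Φ a b c d = -Φ a d c b := by
  rw [p34 h, p23 h, p34 h]; ring
lemma p14 (h : Alt4 Φ) (a b c d) : Φ a b c d = -Φ d b c a := by
  rw [p12 h, p24 h, p12 h]; ring
lemma pswap (h : Alt4 Φ) (a b c d) : Φ a b c d = Φ c d a b := by
  rw [p13 h, p24 h]; ring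

lemma z12 (h : Alt4 Φ) (a c d) : Φ a a c d = 0 := by have := p12 h a a c d; linarith
lemma z13 (h : Alt4 Φ) (a c d) : Φ a c a d = 0 := by have := p13 h a c a d; linarith
lemma z14 (h : Alt4 Φ) (a c d) : Φ a c d a = 0 := by have := p14 h a c d a; linarith
lemma z23 (h : Alt4 Φ) (a c d) : Φ a c c d = 0 := by have := p23 h a c c d; linarith
lemma z24 (h : Alt4 Φ) (a c d) : Φ a c d c = 0 := by have := p24 h a c d c; linarith
lemma z34 (h : Alt4 Φ) (a c d) : Φ a c d d = 0 := by have := p34 h a c d d; linarith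

lemma g12 (h : Alt3 γ) (a b c) : γ a b c = -γ b a c := (h a b c).1
lemma g23 (h : Alt3 γ) (a b c) : γ a b c = -γ a c b := (h a b c).2
lemma g13 (h : Alt3 γ) (a b c) : γ a b c = -γ c b a := by
  rw [g12 h, g23 h, g12 h]; ring
lemma gcyc (h : Alt3 γ) (a b c) : γ a b c = γ b c a := by
  rw [g12 h, g23 h]; ring
lemma gz12 (h : Alt3 γ) (a c) : γ a a c = 0 := by have := g12 h a a c; linarith
lemma gz13 (h : Alt3 γ) (a c) : γ a c a = 0 := by have := g13 h a c a; linarith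
lemma gz23 (h : Alt3 γ) (a c) : γ a c c = 0 := by have := g23 h a c c; linarith

lemma lemA (hΦ : Alt4 Φ) (hC : Cayley Φ) (i j a b : Fin 8) :
    ∑ p, ∑ q, Φ i j p q * Φ a b p q
      = 6 * (kron i a * kron j b) - 6 * (kron i b * kron j a) - 4 * Φ i j a b := by
  rw [Finset.sum_congr rfl (fun p _ => hC i j p a b p)]
  simp [kron, Finset.sum_add_distrib, Finset.sum_sub_distrib, mul_ite, ite_mul,
    z12 hΦ, z13 hΦ, z14 hΦ, z23 hΦ, z24 hΦ, z34 hΦ, Finset.mul_sum]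
  rw [p34 hΦ i j b a, p12 hΦ j i a b]
  split_ifs <;> ring

lemma lemB (hΦ : Alt4 Φ) (hγ : Alt3 γ) (hC : Cayley Φ) (i j k : Fin 8) :
    ∑ q, ∑ r, ∑ s, ∑ p, Φ i j p q * Φ k p r s * γ q r s
      = -2 * γ i j k
        + kron i k * (∑ q, ∑ r, ∑ s, Φ j q r s * γ q r s)
        - kron j k * (∑ q, ∑ r, ∑ s, Φ i q r s * γ q r s)
        + (∑ r, ∑ s, Φ i j r s * γ k r s)
        - 2 * (∑ r, ∑ s, Φ j k r s * γ i r s)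
        + 2 * (∑ r, ∑ s, Φ i k r s * γ j r s) := by
  have h2 : ∀ q r s : Fin 8, ∑ p, Φ i j p q * Φ k p r s * γ q r s
      = (∑ p, Φ i j q p * Φ k r s p) * -γ q r s := by
    intro q r s
    rw [Finset.sum_mul]
    exact Finset.sum_congr rfl (fun p _ => by
      rw [p34 hΦ i j p q, p23 hΦ k p r s, p34 hΦ k r p s]; ring)
  have h3 : ∀ q r s : Fin 8, ∑ p, Φ i j p q * Φ k p r s * γ q r s
      = (kron i k * kron j r * kron q s + kron i r * kron j s * kron q k
        + kron i s * kron j k * kron q r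
      - kron i k * kron j s * kron q r - kron i s * kron j r * kron q k
      - kron i r * kron j k * kron q s
      - kron i k * Φ j q r s - kron j k * Φ q i r s - kron q k * Φ i j r s
      - kron i r * Φ j q s k - kron j r * Φ q i s k - kron q r * Φ i j s k
      - kron i s * Φ j q k r - kron j s * Φ q i k r - kron q s * Φ i j k r) * -γ q r s := by
    intro q r s; rw [h2 q r s, hC i j q k r s]
  rw [Finset.sum_congr rfl (fun q _ => Finset.sum_congr rfl (fun r _ =>
    Finset.sum_congr rfl (fun s _ => h3 q r s)))]
  simp [kron, Finset.sum_add_distrib, Finset.sum_sub_distrib, mul_ite, ite_mul,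
    z12 hΦ, z13 hΦ, z14 hΦ, z23 hΦ, z24 hΦ, z34 hΦ,
    gz12 hγ, gz13 hγ, gz23 hγ, Finset.mul_sum, Finset.sum_neg_distrib, neg_mul, mul_neg,
    add_mul, sub_mul]
  have e0 : ∀ r s : Fin 8, Φ r i k s * γ r s j = Φ i k r s * γ j r s := by
    intro r s
    rw [p13 hΦ r i k s, p12 hΦ k i r s, gcyc hγ r s j, gcyc hγ s j r]; ring
  have eVi : ∀ q r s : Fin 8, Φ q i r s * γ q r s = -(Φ i q r s * γ q r s) := by
    intro q r s; rw [p12 hΦ q i r s]; ring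
  have eX4 : ∀ r s : Fin 8, Φ j r s k * γ r i s = -(Φ j k r s * γ i r s) := by
    intro r s
    rw [p24 hΦ j r s k, p34 hΦ j k s r, g12 hγ r i s]; ring
  have eX5 : ∀ r s : Fin 8, Φ r i s k * γ r j s = Φ i k r s * γ j r s := by
    intro r s
    rw [p12 hΦ r i s k, p24 hΦ i r s k, p34 hΦ i k s r, g12 hγ r j s]; ring
  have eX6 : ∀ r s : Fin 8, Φ j r k s * γ r s i = -(Φ j k r s * γ i r s) := by
    intro r s
    rw [p23 hΦ j r k s, gcyc hγ r s i, gcyc hγ s i r]; ring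
  have eg1 : γ k i j = γ i j k := by rw [gcyc hγ k i j]
  have eg2 : γ k j i = -γ i j k := by rw [g13 hγ k j i]
  simp only [e0, eVi, eX4, eX5, eX6, eg1, eg2, Finset.sum_neg_distrib]
  split_ifs <;> (simp only [mul_assoc, ← Finset.mul_sum]; ring)

lemma sum3_rot (f : Fin 8 → Fin 8 → Fin 8 → ℝ) :
    ∑ p, ∑ r, ∑ s, f p r s = ∑ r, ∑ s, ∑ p, f p r s := by
  rw [Finset.sum_comm]
  exact Finset.sum_congr rfl fun r _ => Finset.sum_comm

lemma sum4_rot (f : Fin 8 → Fin 8 → Fin 8 → Fin 8 → ℝ) :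
    ∑ p, ∑ q, ∑ r, ∑ s, f p q r s = ∑ q, ∑ r, ∑ s, ∑ p, f p q r s := by
  rw [Finset.sum_comm]
  exact Finset.sum_congr rfl fun q _ => sum3_rot _

lemma lemT2 (hΦ : Alt4 Φ) (hγ : Alt3 γ) (hC : Cayley Φ) (a b c : Fin 8) :
    ∑ p, ∑ q, ∑ r, ∑ s, Φ a b p q * (Φ p q r s * γ c r s)
      = 12 * γ a b c - 4 * ∑ r, ∑ s, Φ a b r s * γ c r s := by
  rw [sum4_rot, sum4_rot]
  have inner : ∀ r s : Fin 8, ∑ p, ∑ q, Φ a b p q * (Φ p q r s * γ c r s)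
      = (6 * (kron a r * kron b s) - 6 * (kron a s * kron b r) - 4 * Φ a b r s)
          * γ c r s := by
    intro r s
    have hpt : ∀ p q : Fin 8, Φ a b p q * (Φ p q r s * γ c r s)
        = Φ a b p q * Φ r s p q * γ c r s := by
      intro p q; rw [pswap hΦ p q r s]; ring
    rw [Finset.sum_congr rfl fun p _ => Finset.sum_congr rfl fun q _ => hpt p q]
    simp only [← Finset.sum_mul]
    rw [lemA hΦ hC a b r s]
  rw [Finset.sum_congr rfl fun r _ => Finset.sum_congr rfl fun s _ => inner r s]
  have eg1 : γ c a b = γ a b c := by rw [gcyc hγ c a b]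
  have eg2 : γ c b a = -γ a b c := by rw [g13 hγ c b a]
  simp [kron, sub_mul, mul_ite, ite_mul, Finset.sum_add_distrib, Finset.sum_sub_distrib,
    Finset.mul_sum, eg1, eg2]
  simp only [← mul_assoc]
  ring

lemma lemY (hΦ : Alt4 Φ) (hγ : Alt3 γ) (hC : Cayley Φ) (a b c : Fin 8) :
    ∑ p, ∑ q, Φ a b p q * J3 Φ γ c p q
      = 4 * γ a b c
        + kron a c * (∑ q, ∑ r, ∑ s, Φ b q r s * γ q r s)
        - kron b c * (∑ q, ∑ r, ∑ s, Φ a q r s * γ q r s)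
        - (∑ r, ∑ s, Φ a b r s * γ c r s)
        - 2 * (∑ r, ∑ s, Φ b c r s * γ a r s)
        + 2 * (∑ r, ∑ s, Φ a c r s * γ b r s) := by
  have key : ∀ p q : Fin 8, 2 * (Φ a b p q * J3 Φ γ c p q)
      = ∑ r, ∑ s, (Φ a b p q * (Φ c p r s * γ q r s)
        + Φ a b p q * (Φ p q r s * γ c r s)
        + Φ a b p q * (Φ q c r s * γ p r s)) := by
    intro p q
    simp only [J3, Finset.mul_sum]
    exact Finset.sum_congr rfl fun r _ => Finset.sum_congr rfl fun s _ => by ring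
  have h2 : 2 * ∑ p, ∑ q, Φ a b p q * J3 Φ γ c p q
      = (∑ p, ∑ q, ∑ r, ∑ s, Φ a b p q * (Φ c p r s * γ q r s))
        + (∑ p, ∑ q, ∑ r, ∑ s, Φ a b p q * (Φ p q r s * γ c r s))
        + (∑ p, ∑ q, ∑ r, ∑ s, Φ a b p q * (Φ q c r s * γ p r s)) := by
    simp only [← Finset.sum_add_distrib, Finset.mul_sum]
    exact Finset.sum_congr rfl fun p _ => Finset.sum_congr rfl fun q _ => key p q
  have hT1 : ∑ p, ∑ q, ∑ r, ∑ s, Φ a b p q * (Φ c p r s * γ q r s)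
      = ∑ q, ∑ r, ∑ s, ∑ p, Φ a b p q * Φ c p r s * γ q r s := by
    rw [sum4_rot]
    exact Finset.sum_congr rfl fun q _ => Finset.sum_congr rfl fun r _ =>
      Finset.sum_congr rfl fun s _ => Finset.sum_congr rfl fun p _ => by ring
  have hT3 : ∑ p, ∑ q, ∑ r, ∑ s, Φ a b p q * (Φ q c r s * γ p r s)
      = ∑ p, ∑ q, ∑ r, ∑ s, Φ a b p q * (Φ c p r s * γ q r s) := by
    rw [Finset.sum_comm]
    refine Finset.sum_congr rfl fun p _ => Finset.sum_congr rfl fun q _ =>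
      Finset.sum_congr rfl fun r _ => Finset.sum_congr rfl fun s _ => ?_
    rw [p34 hΦ a b q p, p12 hΦ p c r s]; ring
  have hB := lemB hΦ hγ hC a b c
  have h6 : 2 * ∑ p, ∑ q, Φ a b p q * J3 Φ γ c p q
      = 2 * (∑ q, ∑ r, ∑ s, ∑ p, Φ a b p q * Φ c p r s * γ q r s)
        + (12 * γ a b c - 4 * ∑ r, ∑ s, Φ a b r s * γ c r s) := by
    rw [h2, hT3, hT1, lemT2 hΦ hγ hC a b c]; ring
  have := h6
  rw [hB] at this
  linarith [this]

lemma kron_comm (a b : Fin 8) : kron a b = kron b a := by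
  simp [kron, eq_comm]

lemma J3split (σ : Fin 8 → Fin 8 → Fin 8 → ℝ) (i j k : Fin 8) :
    J3 Φ σ i j k = (1/2 : ℝ) * ((∑ p, ∑ q, Φ i j p q * σ k p q)
      + (∑ p, ∑ q, Φ j k p q * σ i p q) + (∑ p, ∑ q, Φ k i p q * σ j p q)) := by
  simp only [J3, ← Finset.sum_add_distrib]

lemma J3add (f g : Fin 8 → Fin 8 → Fin 8 → ℝ) (i j k : Fin 8) :
    J3 Φ (fun a b c => f a b c + g a b c) i j k = J3 Φ f i j k + J3 Φ g i j k := by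
  simp only [J3, Finset.mul_sum, ← Finset.sum_add_distrib]
  exact Finset.sum_congr rfl fun p _ => Finset.sum_congr rfl fun q _ => by ring

lemma J3smul (c : ℝ) (f : Fin 8 → Fin 8 → Fin 8 → ℝ) (i j k : Fin 8) :
    J3 Φ (fun a b c' => c * f a b c') i j k = c * J3 Φ f i j k := by
  simp only [J3, Finset.mul_sum]
  exact Finset.sum_congr rfl fun p _ => Finset.sum_congr rfl fun q _ => by ring

lemma lemL (hΦ : Alt4 Φ) (hγ : Alt3 γ) (hC : Cayley Φ) (i j k : Fin 8) :
    J3 Φ (J3 Φ γ) i j k = 6 * γ i j k - 5 * J3 Φ γ i j k := by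
  rw [J3split (Φ := Φ) (J3 Φ γ) i j k, lemY hΦ hγ hC i j k, lemY hΦ hγ hC j k i,
      lemY hΦ hγ hC k i j, J3split (Φ := Φ) γ i j k]
  have f1 : ∀ r s : Fin 8, Φ i k r s * γ j r s = -(Φ k i r s * γ j r s) := fun r s => by
    rw [p12 hΦ i k r s]; ring
  have f2 : ∀ r s : Fin 8, Φ j i r s * γ k r s = -(Φ i j r s * γ k r s) := fun r s => by
    rw [p12 hΦ j i r s]; ring
  have f3 : ∀ r s : Fin 8, Φ k j r s * γ i r s = -(Φ j k r s * γ i r s) := fun r s => by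
    rw [p12 hΦ k j r s]; ring
  have k1 : kron j i = kron i j := kron_comm j i
  have k2 : kron k i = kron i k := kron_comm k i
  have k3 : kron k j = kron j k := kron_comm k j
  have g1 : γ j k i = γ i j k := by rw [gcyc hγ i j k]
  have g2 : γ k i j = γ i j k := by rw [gcyc hγ k i j]
  simp only [f1, f2, f3, k1, k2, k3, g1, g2, Finset.sum_neg_distrib]
  ring
end helpers

/-- J₃ is invertible on 3-forms with inverse `(1/6)(J₃ + 5·Id)`. -/
theorem J3_inverse (Φ : Fin 8 → Fin 8 → Fin 8 → Fin 8 → ℝ)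
    (hΦ : Alt4 Φ) (hCayley : Cayley Φ) :
    ∀ γ : Fin 8 → Fin 8 → Fin 8 → ℝ, Alt3 γ → ∀ i j k,
      J3 Φ (fun a b c => (1/6 : ℝ) * (J3 Φ γ a b c + 5 * γ a b c)) i j k = γ i j k ∧
      (1/6 : ℝ) * (J3 Φ (J3 Φ γ) i j k + 5 * J3 Φ γ i j k) = γ i j k := by
  intro γ hγ i j k
  have hL := lemL hΦ hγ hCayley i j k
  constructor
  · have e1 : J3 Φ (fun a b c => (1/6 : ℝ) * (J3 Φ γ a b c + 5 * γ a b c)) i j k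
        = (1/6 : ℝ) * (J3 Φ (J3 Φ γ) i j k + 5 * J3 Φ γ i j k) := by
      calc J3 Φ (fun a b c => (1/6 : ℝ) * (J3 Φ γ a b c + 5 * γ a b c)) i j k
          = (1/6 : ℝ) * J3 Φ (fun a b c => J3 Φ γ a b c + 5 * γ a b c) i j k :=
            J3smul (1/6 : ℝ) (fun a b c => J3 Φ γ a b c + 5 * γ a b c) i j k
        _ = (1/6 : ℝ) * (J3 Φ (J3 Φ γ) i j k
              + J3 Φ (fun a b c => 5 * γ a b c) i j k) := by
            rw [J3add (Φ := Φ) (J3 Φ γ) (fun a b c => 5 * γ a b c) i j k]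
        _ = (1/6 : ℝ) * (J3 Φ (J3 Φ γ) i j k + 5 * J3 Φ γ i j k) := by
            rw [J3smul (Φ := Φ) (5 : ℝ) γ i j k]
    rw [e1, hL]; ring
  · rw [hL]; ring
end
end Spin7
end

section
/- For every 8×8 real matrix H (not necessarily symmetric), the 4-form K(H) is annihilated by π₂₇: π₂₇(K(H)) = 0. In other words, 4-forms of the shape H_{[i}{}^p Φ_{jkl]p} lie in Λ⁴₁ ⊕ Λ⁴₇ ⊕ Λ⁴₃₅ and have no Λ⁴₂₇ component. -/
namespace Spin7

noncomputable section

variable {Φ : Fin 8 → Fin 8 → Fin 8 → Fin 8 → ℝ} {H : Fin 8 → Fin 8 → ℝ}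

lemma sw12 (h : Alt4 Φ) (i j k l) : Φ i j k l = -Φ j i k l := (h i j k l).1
lemma sw23 (h : Alt4 Φ) (i j k l) : Φ i j k l = -Φ i k j l := (h i j k l).2.1
lemma sw34 (h : Alt4 Φ) (i j k l) : Φ i j k l = -Φ i j l k := (h i j k l).2.2
lemma sw13_s11 (h : Alt4 Φ) (i j k l) : Φ i j k l = -Φ k j i l := by
  rw [sw12 h, sw23 h, sw12 h]; ring
lemma sw24_s11 (h : Alt4 Φ) (i j k l) : Φ i j k l = -Φ i l k j := by
  rw [sw23 h, sw34 h, sw23 h]; ring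
lemma sw14_s11 (h : Alt4 Φ) (i j k l) : Φ i j k l = -Φ l j k i := by
  rw [sw13_s11 h, sw34 h, sw13_s11 h]; ring
lemma zero24 (h : Alt4 Φ) (i a k : Fin 8) : Φ i a k a = 0 := by
  have := sw24_s11 h i a k a; linarith
lemma zero13 (h : Alt4 Φ) (a j l : Fin 8) : Φ a j a l = 0 := by
  have := sw13_s11 h a j a l; linarith
lemma zero14 (h : Alt4 Φ) (a j k : Fin 8) : Φ a j k a = 0 := by
  have := sw14_s11 h a j k a; linarith
lemma zero23 (h : Alt4 Φ) (i a l : Fin 8) : Φ i a a l = 0 := by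
  have := sw23 h i a a l; linarith
lemma zero12 (h : Alt4 Φ) (a k l : Fin 8) : Φ a a k l = 0 := by
  have := sw12 h a a k l; linarith
lemma zero34 (h : Alt4 Φ) (i j a : Fin 8) : Φ i j a a = 0 := by
  have := sw34 h i j a a; linarith

-- double contraction
lemma c2 (h : Alt4 Φ) (hC : Cayley Φ) (i j k l : Fin 8) :
    (∑ a, ∑ b, Φ i j a b * Φ k l a b)
      = 6 * (kron i k * kron j l - kron i l * kron j k) - 4 * Φ i j k l := by
  have h1 : ∀ a : Fin 8, (∑ b, Φ i j a b * Φ k l a b) =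
      kron i k * kron j l * kron a a + kron i l * kron j a * kron a k
        + kron i a * kron j k * kron a l
      - kron i k * kron j a * kron a l - kron i a * kron j l * kron a k
      - kron i l * kron j k * kron a a
      - kron i k * Φ j a l a - kron j k * Φ a i l a - kron a k * Φ i j l a
      - kron i l * Φ j a a k - kron j l * Φ a i a k - kron a l * Φ i j a k
      - kron i a * Φ j a k l - kron j a * Φ a i k l - kron a a * Φ i j k l := by
    intro a; exact hC i j a k l a
  rw [Finset.sum_congr rfl fun a _ => h1 a]
  simp only [zero24 h, zero13 h, zero14 h, zero23 h, mul_zero, sub_zero,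
    kron, mul_ite, ite_mul, one_mul, mul_one, zero_mul, mul_zero, if_pos rfl]
  simp only [Finset.sum_sub_distrib, Finset.sum_add_distrib, Finset.sum_ite_eq,
    Finset.sum_ite_eq', Finset.mem_univ, if_true, Finset.sum_const, Finset.card_univ,
    Fintype.card_fin, nsmul_eq_mul, Finset.sum_ite_irrel, Finset.sum_const_zero]
  push_cast
  rw [sw12 h j i k l, sw34 h i j l k]
  split_ifs <;> ring

/-- helper operators -/
def Bop (Φ : Fin 8 → Fin 8 → Fin 8 → Fin 8 → ℝ) (H : Fin 8 → Fin 8 → ℝ)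
    (x a b c : Fin 8) : ℝ := ∑ p, H x p * Φ p a b c
def Cop (Φ : Fin 8 → Fin 8 → Fin 8 → Fin 8 → ℝ) (H : Fin 8 → Fin 8 → ℝ)
    (x a b c : Fin 8) : ℝ := ∑ p, H p x * Φ a p b c
def Pop (Φ : Fin 8 → Fin 8 → Fin 8 → Fin 8 → ℝ) (H : Fin 8 → Fin 8 → ℝ)
    (x y : Fin 8) : ℝ := ∑ a, ∑ p, H a p * Φ x a y p
def trH (H : Fin 8 → Fin 8 → ℝ) : ℝ := ∑ a, H a a

/-- the S-term -/
def Sterm (Φ : Fin 8 → Fin 8 → Fin 8 → Fin 8 → ℝ) (H : Fin 8 → Fin 8 → ℝ)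
    (i j k l : Fin 8) : ℝ :=
  kron i k * kron j l * trH H + kron i l * H k j + kron j k * H l i
    - kron i k * H l j - kron j l * H k i - kron i l * kron j k * trH H
    - kron i k * Pop Φ H j l + kron j k * Pop Φ H i l + Bop Φ H k i j l
    + kron i l * Pop Φ H j k - kron j l * Pop Φ H i k - Bop Φ H l i j k
    - Cop Φ H i j k l + Cop Φ H j i k l - trH H * Φ i j k l

lemma SW (h : Alt4 Φ) (hC : Cayley Φ) (i j k l : Fin 8) :
    (∑ a, ∑ p, H a p * (∑ b, Φ i j a b * Φ k l p b)) = Sterm Φ H i j k l := by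
  have hpt : ∀ a p : Fin 8, H a p * (∑ b, Φ i j a b * Φ k l p b) =
      kron i k * kron j l * (kron a p * H a p) + kron i l * (kron j p * (kron a k * H a p))
        + kron j k * (kron i p * (kron a l * H a p))
      - kron i k * (kron j p * (kron a l * H a p)) - kron j l * (kron i p * (kron a k * H a p))
      - kron i l * kron j k * (kron a p * H a p)
      - kron i k * (H a p * Φ j a l p) + kron j k * (H a p * Φ i a l p)
      + kron a k * (H a p * Φ p i j l)
      + kron i l * (H a p * Φ j a k p) - kron j l * (H a p * Φ i a k p)
      - kron a l * (H a p * Φ p i j k)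
      - kron i p * (H a p * Φ j a k l) + kron j p * (H a p * Φ i a k l)
      - kron a p * (H a p * Φ i j k l) := by
    intro a p
    rw [hC i j a k l p]
    rw [show Φ a i l p = -Φ i a l p from sw12 h a i l p,
        show Φ i j l p = -Φ p i j l from by
          linarith [sw34 h i j l p, sw23 h i j p l, sw12 h i p j l],
        show Φ j a p k = -Φ j a k p from sw34 h j a p k,
        show Φ a i p k = Φ i a k p from by
          linarith [sw12 h a i p k, sw34 h i a p k],
        show Φ i j p k = Φ p i j k from by
          linarith [sw23 h i j p k, sw12 h i p j k],
        show Φ a i k l = -Φ i a k l from sw12 h a i k l]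
    ring
  rw [Finset.sum_congr rfl fun a _ => Finset.sum_congr rfl fun p _ => hpt a p]
  simp only [Sterm, Bop, Cop, Pop, trH, kron, mul_ite, ite_mul, one_mul, mul_one,
    zero_mul, mul_zero, Finset.sum_add_distrib, Finset.sum_sub_distrib,
    Finset.sum_ite_eq, Finset.sum_ite_eq', Finset.mem_univ, if_true,
    Finset.sum_ite_irrel, Finset.sum_const_zero, Finset.mul_sum, Finset.sum_mul]
  try split_ifs <;> ring



lemma BC (h : Alt4 Φ) (hC : Cayley Φ) (x i j l : Fin 8) :
    (∑ p, H x p * (∑ a, ∑ b, Φ i j a b * Φ p l a b))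
      = 6 * kron j l * H x i - 6 * kron i l * H x j - 4 * Bop Φ H x i j l := by
  have hpt : ∀ p : Fin 8, H x p * (∑ a, ∑ b, Φ i j a b * Φ p l a b) =
      6 * kron j l * (kron i p * H x p) - 6 * kron i l * (kron j p * H x p)
        - 4 * (H x p * Φ p i j l) := by
    intro p
    rw [c2 h hC i j p l,
      show Φ i j p l = Φ p i j l from by linarith [sw23 h i j p l, sw12 h i p j l]]
    ring
  rw [Finset.sum_congr rfl fun p _ => hpt p]
  simp only [Bop, kron, mul_ite, ite_mul, one_mul, mul_one, zero_mul, mul_zero,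
    Finset.sum_add_distrib, Finset.sum_sub_distrib, Finset.sum_ite_eq,
    Finset.sum_ite_eq', Finset.mem_univ, if_true, Finset.sum_ite_irrel,
    Finset.sum_const_zero, Finset.mul_sum, Finset.sum_mul]

lemma hA2 (h : Alt4 Φ) (hC : Cayley Φ) (i j k l : Fin 8) :
    (∑ a, ∑ b, Φ i j a b * Kmap Φ H k l a b)
      = (6 * kron j l * H k i - 6 * kron i l * H k j - 4 * Bop Φ H k i j l)
        - (6 * kron j k * H l i - 6 * kron i k * H l j - 4 * Bop Φ H l i j k)
        + 2 * Sterm Φ H i j k l := by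
  have hpt1 : ∀ a b : Fin 8, Φ i j a b * Kmap Φ H k l a b =
      (∑ p, H k p * (Φ i j a b * Φ p l a b)) - (∑ p, H l p * (Φ i j a b * Φ p k a b))
        + (∑ p, H a p * (Φ i j a b * Φ k l p b)) - (∑ p, H b p * (Φ i j a b * Φ p k l a)) := by
    intro a b
    rw [Kmap, Finset.mul_sum, ← Finset.sum_sub_distrib, ← Finset.sum_add_distrib,
      ← Finset.sum_sub_distrib]
    refine Finset.sum_congr rfl fun p _ => ?_
    rw [show Φ p k l b = Φ k l p b from by linarith [sw12 h p k l b, sw23 h k p l b]]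
    ring
  rw [Finset.sum_congr rfl fun a _ => Finset.sum_congr rfl fun b _ => hpt1 a b]
  simp only [Finset.sum_add_distrib, Finset.sum_sub_distrib]
  -- term 1
  have e1 : (∑ a, ∑ b, ∑ p, H k p * (Φ i j a b * Φ p l a b))
      = ∑ p, H k p * (∑ a, ∑ b, Φ i j a b * Φ p l a b) := by
    rw [Finset.sum_congr rfl fun a (_ : a ∈ Finset.univ) => Finset.sum_comm, Finset.sum_comm]
    exact Finset.sum_congr rfl fun p _ => by
      simp only [← Finset.mul_sum]
  have e2 : (∑ a, ∑ b, ∑ p, H l p * (Φ i j a b * Φ p k a b))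
      = ∑ p, H l p * (∑ a, ∑ b, Φ i j a b * Φ p k a b) := by
    rw [Finset.sum_congr rfl fun a (_ : a ∈ Finset.univ) => Finset.sum_comm, Finset.sum_comm]
    exact Finset.sum_congr rfl fun p _ => by
      simp only [← Finset.mul_sum]
  have e3 : (∑ a, ∑ b, ∑ p, H a p * (Φ i j a b * Φ k l p b))
      = ∑ a, ∑ p, H a p * (∑ b, Φ i j a b * Φ k l p b) := by
    refine Finset.sum_congr rfl fun a _ => ?_
    rw [Finset.sum_comm]
    exact Finset.sum_congr rfl fun p _ => by
      simp only [← Finset.mul_sum]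
  have step1 : ∀ b : Fin 8, (∑ a, ∑ p, H b p * (Φ i j a b * Φ p k l a))
      = -∑ p, H b p * (∑ a, Φ i j b a * Φ k l p a) := by
    intro b
    rw [Finset.sum_comm, ← Finset.sum_neg_distrib]
    refine Finset.sum_congr rfl fun p _ => ?_
    rw [← Finset.mul_sum,
      show (∑ a, Φ i j b a * Φ k l p a) = -∑ a, Φ i j a b * Φ p k l a from by
        rw [← Finset.sum_neg_distrib]
        refine Finset.sum_congr rfl fun a _ => ?_
        rw [show Φ i j b a = -Φ i j a b from sw34 h i j b a,
          show Φ k l p a = Φ p k l a from by linarith [sw12 h p k l a, sw23 h k p l a]]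
        ring]
    ring
  have e4 : (∑ a, ∑ b, ∑ p, H b p * (Φ i j a b * Φ p k l a))
      = -∑ a, ∑ p, H a p * (∑ b, Φ i j a b * Φ k l p b) := by
    rw [Finset.sum_comm, Finset.sum_congr rfl fun b (_ : b ∈ Finset.univ) => step1 b,
      Finset.sum_neg_distrib]
  rw [e1, e2, e3, e4, BC h hC k i j l, BC h hC l i j k, SW h hC i j k l]
  ring

lemma c3 (h : Alt4 Φ) (hC : Cayley Φ) (i j : Fin 8) :
    (∑ b, ∑ c, ∑ d, Φ i b c d * Φ j b c d) = 42 * kron i j := by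
  have hpt : ∀ b : Fin 8, (∑ c, ∑ d, Φ i b c d * Φ j b c d) =
      6 * (kron i j * kron b b - kron i b * kron b j) - 4 * Φ i b j b := by
    intro b; exact c2 h hC i b j b
  rw [Finset.sum_congr rfl fun b _ => hpt b]
  simp only [zero24 h, mul_zero, sub_zero, kron, mul_ite, ite_mul, one_mul, mul_one,
    zero_mul, mul_zero, mul_sub, Finset.sum_sub_distrib, Finset.sum_ite_eq,
    Finset.sum_ite_eq', Finset.mem_univ, if_true, Finset.sum_ite_irrel,
    Finset.sum_const_zero, Finset.sum_const, Finset.card_univ, Fintype.card_fin,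
    nsmul_eq_mul, if_pos rfl]
  push_cast
  split_ifs <;> ring

lemma sum_comm3 (g : Fin 8 → Fin 8 → Fin 8 → ℝ) :
    (∑ a, ∑ b, ∑ p, g a b p) = ∑ p, ∑ a, ∑ b, g a b p := by
  rw [Finset.sum_congr rfl fun a (_ : a ∈ Finset.univ) => Finset.sum_comm, Finset.sum_comm]

lemma sum_comm4 (g : Fin 8 → Fin 8 → Fin 8 → Fin 8 → ℝ) :
    (∑ a, ∑ b, ∑ c, ∑ p, g a b c p) = ∑ p, ∑ a, ∑ b, ∑ c, g a b c p := by
  rw [Finset.sum_congr rfl fun a (_ : a ∈ Finset.univ) => sum_comm3 (g a), Finset.sum_comm]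

lemma sum_pairswap (g : Fin 8 → Fin 8 → Fin 8 → Fin 8 → ℝ) :
    (∑ a, ∑ b, ∑ c, ∑ d, g a b c d) = ∑ a, ∑ b, ∑ c, ∑ d, g c d a b := by
  rw [Finset.sum_congr rfl fun a (_ : a ∈ Finset.univ) => (sum_comm3 fun c d b => g a b c d).symm]
  exact (sum_comm3 fun c d a => ∑ b, g a b c d).symm


lemma sum2_congr {F G : Fin 8 → Fin 8 → ℝ} (h : ∀ a b, F a b = G a b) :
    (∑ a, ∑ b, F a b) = ∑ a, ∑ b, G a b :=
  Finset.sum_congr rfl fun a _ => Finset.sum_congr rfl fun b _ => h a b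

lemma sum3_congr {F G : Fin 8 → Fin 8 → Fin 8 → ℝ} (h : ∀ a b c, F a b c = G a b c) :
    (∑ a, ∑ b, ∑ c, F a b c) = ∑ a, ∑ b, ∑ c, G a b c :=
  Finset.sum_congr rfl fun a _ => sum2_congr (h a)

lemma sum4_congr {F G : Fin 8 → Fin 8 → Fin 8 → Fin 8 → ℝ}
    (h : ∀ a b c d, F a b c d = G a b c d) :
    (∑ a, ∑ b, ∑ c, ∑ d, F a b c d) = ∑ a, ∑ b, ∑ c, ∑ d, G a b c d :=
  Finset.sum_congr rfl fun a _ => sum3_congr (h a)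

lemma sum5_congr {F G : Fin 8 → Fin 8 → Fin 8 → Fin 8 → Fin 8 → ℝ}
    (h : ∀ a b c d p, F a b c d p = G a b c d p) :
    (∑ a, ∑ b, ∑ c, ∑ d, ∑ p, F a b c d p) = ∑ a, ∑ b, ∑ c, ∑ d, ∑ p, G a b c d p :=
  Finset.sum_congr rfl fun a _ => sum4_congr (h a)

lemma sum5_flip (F : Fin 8 → Fin 8 → Fin 8 → Fin 8 → Fin 8 → ℝ) :
    (∑ a, ∑ b, ∑ c, ∑ d, ∑ p, F a b c d p) = ∑ a, ∑ b, ∑ c, ∑ d, ∑ p, F b a c d p :=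
  Finset.sum_comm

lemma sum5_pairswap (F : Fin 8 → Fin 8 → Fin 8 → Fin 8 → Fin 8 → ℝ) :
    (∑ a, ∑ b, ∑ c, ∑ d, ∑ p, F a b c d p) = ∑ a, ∑ b, ∑ c, ∑ d, ∑ p, F c d a b p :=
  sum_pairswap fun a b c d => ∑ p, F a b c d p

-- trace contraction: Φ^{abcd} K_{abcd} = 168 tr H
lemma hT3 (h : Alt4 Φ) (hC : Cayley Φ) :
    (∑ a, ∑ b, ∑ c, ∑ d, Φ a b c d * Kmap Φ H a b c d) = 168 * trH H := by
  have hpt : ∀ a b c d : Fin 8, Φ a b c d * Kmap Φ H a b c d =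
      (∑ p, H a p * (Φ a b c d * Φ p b c d)) - (∑ p, H b p * (Φ a b c d * Φ p a c d))
        + (∑ p, H c p * (Φ a b c d * Φ p a b d)) - (∑ p, H d p * (Φ a b c d * Φ p a b c)) := by
    intro a b c d
    rw [Kmap, Finset.mul_sum, ← Finset.sum_sub_distrib, ← Finset.sum_add_distrib,
      ← Finset.sum_sub_distrib]
    exact Finset.sum_congr rfl fun p _ => by ring
  rw [sum4_congr hpt]
  simp only [Finset.sum_add_distrib, Finset.sum_sub_distrib]
  have p1 : (∑ a, ∑ b, ∑ c, ∑ d, ∑ p, H a p * (Φ a b c d * Φ p b c d)) = 42 * trH H := by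
    rw [Finset.sum_congr rfl fun a (_ : a ∈ Finset.univ) => sum_comm4 fun b c d p =>
      H a p * (Φ a b c d * Φ p b c d)]
    have inner : ∀ a p : Fin 8, (∑ b, ∑ c, ∑ d, H a p * (Φ a b c d * Φ p b c d))
        = H a p * (42 * kron a p) := by
      intro a p
      simp only [← Finset.mul_sum]
      rw [c3 h hC a p]
    rw [sum2_congr inner]
    simp only [trH, kron, mul_ite, ite_mul, one_mul, mul_one, zero_mul, mul_zero,
      Finset.sum_ite_eq, Finset.sum_ite_eq', Finset.mem_univ, if_true,
      Finset.sum_ite_irrel, Finset.sum_const_zero, Finset.mul_sum, Finset.sum_mul]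
    exact Finset.sum_congr rfl fun x _ => by ring
  have p2 : (∑ a, ∑ b, ∑ c, ∑ d, ∑ p, H b p * (Φ a b c d * Φ p a c d)) = -(42 * trH H) := by
    rw [sum5_flip, sum5_congr (G := fun a b c d p => -(H a p * (Φ a b c d * Φ p b c d)))
      (fun a b c d p => by rw [show Φ b a c d = -Φ a b c d from sw12 h b a c d]; ring)]
    simp only [Finset.sum_neg_distrib]
    rw [p1]
  have p3 : (∑ a, ∑ b, ∑ c, ∑ d, ∑ p, H c p * (Φ a b c d * Φ p a b d)) = 42 * trH H := by
    rw [sum5_pairswap, sum5_congr (G := fun a b c d p => H a p * (Φ a b c d * Φ p b c d))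
      (fun a b c d p => by
        rw [show Φ c d a b = Φ a b c d from by
              linarith [sw13_s11 h c d a b, sw24_s11 h a d c b],
            show Φ p c d b = Φ p b c d from by
              linarith [sw34 h p c d b, sw23 h p c b d]]), p1]
  have p4 : (∑ a, ∑ b, ∑ c, ∑ d, ∑ p, H d p * (Φ a b c d * Φ p a b c)) = -(42 * trH H) := by
    rw [sum5_pairswap, sum5_flip,
      sum5_congr (G := fun a b c d p => -(H a p * (Φ a b c d * Φ p b c d)))
      (fun a b c d p => by
        rw [show Φ c d b a = -Φ a b c d from by
              linarith [sw13_s11 h c d b a, sw24_s11 h b d c a, sw12 h b a c d],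
            show Φ p c d b = Φ p b c d from by
              linarith [sw34 h p c d b, sw23 h p c b d]]; ring)]
    simp only [Finset.sum_neg_distrib]
    rw [p1]
  rw [p1, p2, p3, p4]; ring

lemma FL (h : Alt4 Φ) (hC : Cayley Φ) (i j k l : Fin 8) :
    (∑ a, ∑ b, ∑ c, ∑ d, ∑ p, (H a p * Φ i j a b) * (Φ p b c d * Φ k l c d))
      = -6 * Cop Φ H k i j l + 6 * Cop Φ H l i j k - 4 * Sterm Φ H i j k l := by
  -- bring p before c, d
  have reord : ∀ a b : Fin 8, (∑ c, ∑ d, ∑ p, (H a p * Φ i j a b) * (Φ p b c d * Φ k l c d))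
      = ∑ p, (H a p * Φ i j a b) * (6 * (kron p k * kron b l - kron p l * kron b k)
          - 4 * Φ p b k l) := by
    intro a b
    rw [sum_comm3 fun c d p => (H a p * Φ i j a b) * (Φ p b c d * Φ k l c d)]
    refine Finset.sum_congr rfl fun p _ => ?_
    simp only [← Finset.mul_sum]
    rw [c2 h hC p b k l]
  rw [sum2_congr reord]
  have hpt : ∀ a b p : Fin 8, (H a p * Φ i j a b) *
      (6 * (kron p k * kron b l - kron p l * kron b k) - 4 * Φ p b k l)
      = 6 * (kron p k * (kron b l * (H a p * Φ i j a b)))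
        - 6 * (kron p l * (kron b k * (H a p * Φ i j a b)))
        - 4 * (H a p * (Φ i j a b * Φ k l p b)) := by
    intro a b p
    rw [show Φ p b k l = Φ k l p b from by linarith [sw13_s11 h p b k l, sw24_s11 h k b p l]]
    ring
  rw [sum3_congr hpt]
  simp only [Finset.sum_sub_distrib]
  have hX1 : (∑ a, ∑ b, ∑ p, 6 * (kron p k * (kron b l * (H a p * Φ i j a b))))
      = -6 * Cop Φ H k i j l := by
    simp only [kron, mul_ite, ite_mul, one_mul, mul_one, zero_mul, mul_zero,
      Finset.sum_ite_eq, Finset.sum_ite_eq', Finset.mem_univ, if_true,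
      Finset.sum_ite_irrel, Finset.sum_const_zero]
    rw [Cop, show (-6 : ℝ) * ∑ p, H p k * Φ i p j l = ∑ p, 6 * -(H p k * Φ i p j l) from by
      rw [Finset.mul_sum]; exact Finset.sum_congr rfl fun p _ => by ring]
    exact Finset.sum_congr rfl fun a _ => by
      rw [show Φ i j a l = -Φ i a j l from sw23 h i j a l]; ring
  have hX2 : (∑ a, ∑ b, ∑ p, 6 * (kron p l * (kron b k * (H a p * Φ i j a b))))
      = -6 * Cop Φ H l i j k := by
    simp only [kron, mul_ite, ite_mul, one_mul, mul_one, zero_mul, mul_zero,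
      Finset.sum_ite_eq, Finset.sum_ite_eq', Finset.mem_univ, if_true,
      Finset.sum_ite_irrel, Finset.sum_const_zero]
    rw [Cop, show (-6 : ℝ) * ∑ p, H p l * Φ i p j k = ∑ p, 6 * -(H p l * Φ i p j k) from by
      rw [Finset.mul_sum]; exact Finset.sum_congr rfl fun p _ => by ring]
    exact Finset.sum_congr rfl fun a _ => by
      rw [show Φ i j a k = -Φ i a j k from sw23 h i j a k]; ring
  have hX3 : (∑ a, ∑ b, ∑ p, 4 * (H a p * (Φ i j a b * Φ k l p b)))
      = 4 * Sterm Φ H i j k l := by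
    rw [← SW h hC i j k l, Finset.mul_sum]
    refine Finset.sum_congr rfl fun a _ => ?_
    rw [Finset.sum_comm, Finset.mul_sum]
    refine Finset.sum_congr rfl fun p _ => ?_
    rw [Finset.mul_sum]
    try rw [Finset.mul_sum]
    try exact Finset.sum_congr rfl fun b _ => by ring
  rw [hX1, hX2, hX3]; ring

lemma swapAB (h : Alt4 Φ) (u v w x : Fin 8) :
    (∑ a, ∑ b, ∑ c, ∑ d, ∑ p, (H b p * Φ u v a b) * (Φ p a c d * Φ w x c d))
      = -∑ a, ∑ b, ∑ c, ∑ d, ∑ p, (H a p * Φ u v a b) * (Φ p b c d * Φ w x c d) := by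
  rw [sum5_flip, sum5_congr (G := fun a b c d p =>
      -((H a p * Φ u v a b) * (Φ p b c d * Φ w x c d)))
    (fun a b c d p => by
      rw [show Φ u v b a = -Φ u v a b from sw34 h u v b a]; ring)]
  simp only [Finset.sum_neg_distrib]

lemma hA1 (h : Alt4 Φ) (hC : Cayley Φ) (i j k l : Fin 8) :
    (∑ a, ∑ b, ∑ c, ∑ d, Φ i j a b * Φ k l c d * Kmap Φ H a b c d)
      = 2 * (-6 * Cop Φ H k i j l + 6 * Cop Φ H l i j k - 4 * Sterm Φ H i j k l)
        + 2 * (-6 * Cop Φ H i k l j + 6 * Cop Φ H j k l i - 4 * Sterm Φ H k l i j) := by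
  have hpt : ∀ a b c d : Fin 8, Φ i j a b * Φ k l c d * Kmap Φ H a b c d =
      (∑ p, (H a p * Φ i j a b) * (Φ p b c d * Φ k l c d))
        - (∑ p, (H b p * Φ i j a b) * (Φ p a c d * Φ k l c d))
        + (∑ p, (H c p * Φ k l c d) * (Φ p d a b * Φ i j a b))
        - (∑ p, (H d p * Φ k l c d) * (Φ p c a b * Φ i j a b)) := by
    intro a b c d
    rw [Kmap, Finset.mul_sum, ← Finset.sum_sub_distrib, ← Finset.sum_add_distrib,
      ← Finset.sum_sub_distrib]
    refine Finset.sum_congr rfl fun p _ => ?_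
    rw [show Φ p a b d = Φ p d a b from by linarith [sw34 h p a b d, sw23 h p a d b],
      show Φ p a b c = Φ p c a b from by linarith [sw34 h p a b c, sw23 h p a c b]]
    ring
  rw [sum4_congr hpt]
  simp only [Finset.sum_add_distrib, Finset.sum_sub_distrib]
  have hS3 : (∑ a, ∑ b, ∑ c, ∑ d, ∑ p, (H c p * Φ k l c d) * (Φ p d a b * Φ i j a b))
      = ∑ a, ∑ b, ∑ c, ∑ d, ∑ p, (H a p * Φ k l a b) * (Φ p b c d * Φ i j c d) :=
    sum5_pairswap fun a b c d p => (H c p * Φ k l c d) * (Φ p d a b * Φ i j a b)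
  have hS4 : (∑ a, ∑ b, ∑ c, ∑ d, ∑ p, (H d p * Φ k l c d) * (Φ p c a b * Φ i j a b))
      = ∑ a, ∑ b, ∑ c, ∑ d, ∑ p, (H b p * Φ k l a b) * (Φ p a c d * Φ i j c d) :=
    sum5_pairswap fun a b c d p => (H d p * Φ k l c d) * (Φ p c a b * Φ i j a b)
  rw [hS3, hS4, swapAB h i j k l, swapAB h k l i j, FL h hC i j k l, FL h hC k l i j]
  ring


lemma fin4_eta (f : Fin 4 → Fin 8) : ![f 0, f 1, f 2, f 3] = f := by
  funext x; fin_cases x <;> rfl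

lemma sgn_mul_cast (π τ : Equiv.Perm (Fin 4)) :
    ((Equiv.Perm.sign π : ℤ) : ℝ) * ((Equiv.Perm.sign (τ * π) : ℤ) : ℝ)
      = ((Equiv.Perm.sign τ : ℤ) : ℝ) := by
  rw [Equiv.Perm.sign_mul]
  rcases Int.units_eq_one_or (Equiv.Perm.sign π) with hπ | hπ <;>
    rcases Int.units_eq_one_or (Equiv.Perm.sign τ) with hτ | hτ <;>
      rw [hπ, hτ] <;> norm_num

lemma asym4_perm (g : Fin 8 → Fin 8 → Fin 8 → Fin 8 → ℝ) (π : Equiv.Perm (Fin 4))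
    (i j k l : Fin 8) :
    asym4 (fun a b c d => g (![a, b, c, d] (π 0)) (![a, b, c, d] (π 1))
        (![a, b, c, d] (π 2)) (![a, b, c, d] (π 3))) i j k l
      = ((Equiv.Perm.sign π : ℤ) : ℝ) * asym4 g i j k l := by
  unfold asym4
  have step1 : ∀ τ : Equiv.Perm (Fin 4),
      ((Equiv.Perm.sign τ : ℤ) : ℝ) *
        (fun a b c d => g (![a, b, c, d] (π 0)) (![a, b, c, d] (π 1))
          (![a, b, c, d] (π 2)) (![a, b, c, d] (π 3)))
        (![i, j, k, l] (τ 0)) (![i, j, k, l] (τ 1)) (![i, j, k, l] (τ 2)) (![i, j, k, l] (τ 3))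
      = ((Equiv.Perm.sign τ : ℤ) : ℝ) *
          g (![i, j, k, l] ((τ * π) 0)) (![i, j, k, l] ((τ * π) 1))
            (![i, j, k, l] ((τ * π) 2)) (![i, j, k, l] ((τ * π) 3)) := by
    intro τ
    have := fin4_eta (fun m => ![i, j, k, l] (τ m))
    simp only [this]
    rfl
  rw [Finset.sum_congr rfl fun τ _ => step1 τ]
  rw [show (∑ τ : Equiv.Perm (Fin 4), ((Equiv.Perm.sign τ : ℤ) : ℝ) *
      g (![i, j, k, l] ((τ * π) 0)) (![i, j, k, l] ((τ * π) 1))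
        (![i, j, k, l] ((τ * π) 2)) (![i, j, k, l] ((τ * π) 3)))
    = ∑ σ : Equiv.Perm (Fin 4), ((Equiv.Perm.sign π : ℤ) : ℝ) *
        (((Equiv.Perm.sign σ : ℤ) : ℝ) *
          g (![i, j, k, l] (σ 0)) (![i, j, k, l] (σ 1)) (![i, j, k, l] (σ 2))
            (![i, j, k, l] (σ 3))) from
    Fintype.sum_equiv (Equiv.mulRight π) _ _ (fun τ => by
      rw [show (Equiv.mulRight π) τ = τ * π from rfl, ← mul_assoc, sgn_mul_cast π τ])]
  rw [← Finset.mul_sum]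
  ring

lemma alt4_perm_apply {g : Fin 8 → Fin 8 → Fin 8 → Fin 8 → ℝ} (hg : Alt4 g)
    (τ : Equiv.Perm (Fin 4)) :
    ∀ v : Fin 4 → Fin 8,
      g (v (τ 0)) (v (τ 1)) (v (τ 2)) (v (τ 3))
        = ((Equiv.Perm.sign τ : ℤ) : ℝ) * g (v 0) (v 1) (v 2) (v 3) := by
  refine Equiv.Perm.swap_induction_on τ ?_ ?_
  · intro v; simp
  · intro f x y hxy IH v
    have h2 := IH (fun m => v (Equiv.swap x y m))
    have happ : ∀ m : Fin 4, (Equiv.swap x y * f) m = Equiv.swap x y (f m) := fun m => rfl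
    rw [happ 0, happ 1, happ 2, happ 3]
    rw [show g (v (Equiv.swap x y (f 0))) (v (Equiv.swap x y (f 1)))
          (v (Equiv.swap x y (f 2))) (v (Equiv.swap x y (f 3)))
        = ((Equiv.Perm.sign f : ℤ) : ℝ) * g (v (Equiv.swap x y 0)) (v (Equiv.swap x y 1))
            (v (Equiv.swap x y 2)) (v (Equiv.swap x y 3)) from h2]
    rw [show g (v (Equiv.swap x y 0)) (v (Equiv.swap x y 1)) (v (Equiv.swap x y 2))
          (v (Equiv.swap x y 3)) = -g (v 0) (v 1) (v 2) (v 3) from by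
      fin_cases x <;> fin_cases y <;> simp_all [Equiv.swap_apply_def] <;>
        linarith [sw12 hg (v 0) (v 1) (v 2) (v 3), sw13_s11 hg (v 0) (v 1) (v 2) (v 3),
          sw14_s11 hg (v 0) (v 1) (v 2) (v 3), sw23 hg (v 0) (v 1) (v 2) (v 3),
          sw24_s11 hg (v 0) (v 1) (v 2) (v 3), sw34 hg (v 0) (v 1) (v 2) (v 3)]]
    rw [Equiv.Perm.sign_mul, Equiv.Perm.sign_swap hxy]
    push_cast
    ring

lemma asym4_alt {g : Fin 8 → Fin 8 → Fin 8 → Fin 8 → ℝ} (hg : Alt4 g) (i j k l : Fin 8) :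
    asym4 g i j k l = g i j k l := by
  unfold asym4
  have hpt : ∀ τ : Equiv.Perm (Fin 4),
      ((Equiv.Perm.sign τ : ℤ) : ℝ) *
        g (![i, j, k, l] (τ 0)) (![i, j, k, l] (τ 1)) (![i, j, k, l] (τ 2))
          (![i, j, k, l] (τ 3)) = g i j k l := by
    intro τ
    rw [alt4_perm_apply hg τ ![i, j, k, l]]
    rw [show (![i,j,k,l] : Fin 4 → Fin 8) 0 = i from rfl,
      show (![i,j,k,l] : Fin 4 → Fin 8) 1 = j from rfl,
      show (![i,j,k,l] : Fin 4 → Fin 8) 2 = k from rfl,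
      show (![i,j,k,l] : Fin 4 → Fin 8) 3 = l from rfl]
    rcases Int.units_eq_one_or (Equiv.Perm.sign τ) with hτ | hτ <;> rw [hτ] <;> norm_num
  rw [Finset.sum_congr rfl fun τ _ => hpt τ]
  rw [Finset.sum_const, Finset.card_univ]
  simp [Fintype.card_perm]
  norm_num [Nat.factorial]
  ring

lemma asym4_congr {f g : Fin 8 → Fin 8 → Fin 8 → Fin 8 → ℝ}
    (hfg : ∀ a b c d, f a b c d = g a b c d) (i j k l : Fin 8) :
    asym4 f i j k l = asym4 g i j k l := by
  unfold asym4
  congr 1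
  exact Finset.sum_congr rfl fun τ _ => by rw [hfg]

lemma asym4_add (f g : Fin 8 → Fin 8 → Fin 8 → Fin 8 → ℝ) (i j k l : Fin 8) :
    asym4 (fun a b c d => f a b c d + g a b c d) i j k l
      = asym4 f i j k l + asym4 g i j k l := by
  unfold asym4
  rw [← mul_add, ← Finset.sum_add_distrib]
  congr 1
  exact Finset.sum_congr rfl fun τ _ => by ring

lemma asym4_sub (f g : Fin 8 → Fin 8 → Fin 8 → Fin 8 → ℝ) (i j k l : Fin 8) :
    asym4 (fun a b c d => f a b c d - g a b c d) i j k l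
      = asym4 f i j k l - asym4 g i j k l := by
  unfold asym4
  rw [← mul_sub, ← Finset.sum_sub_distrib]
  congr 1
  exact Finset.sum_congr rfl fun τ _ => by ring

lemma asym4_cmul (c : ℝ) (f : Fin 8 → Fin 8 → Fin 8 → Fin 8 → ℝ) (i j k l : Fin 8) :
    asym4 (fun w x y z => c * f w x y z) i j k l = c * asym4 f i j k l := by
  unfold asym4
  rw [Finset.sum_congr rfl fun τ (_ : τ ∈ Finset.univ) => (by ring :
      ((Equiv.Perm.sign τ : ℤ) : ℝ) * (fun w x y z => c * f w x y z)
          (![i,j,k,l] (τ 0)) (![i,j,k,l] (τ 1)) (![i,j,k,l] (τ 2)) (![i,j,k,l] (τ 3))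
        = c * (((Equiv.Perm.sign τ : ℤ) : ℝ) *
            f (![i,j,k,l] (τ 0)) (![i,j,k,l] (τ 1)) (![i,j,k,l] (τ 2)) (![i,j,k,l] (τ 3)))),
    ← Finset.mul_sum]
  ring


def pCAB : Equiv.Perm (Fin 4) := ⟨![2,0,1,3], ![1,2,0,3], by decide, by decide⟩
def pDAB : Equiv.Perm (Fin 4) := ⟨![3,0,1,2], ![1,2,3,0], by decide, by decide⟩
def pBA : Equiv.Perm (Fin 4) := ⟨![1,0,2,3], ![1,0,2,3], by decide, by decide⟩
def pACD : Equiv.Perm (Fin 4) := ⟨![0,2,3,1], ![0,3,1,2], by decide, by decide⟩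
def pBCD : Equiv.Perm (Fin 4) := ⟨![1,2,3,0], ![3,0,1,2], by decide, by decide⟩
def pCD : Equiv.Perm (Fin 4) := ⟨![2,3,0,1], ![2,3,0,1], by decide, by decide⟩
def pS02 : Equiv.Perm (Fin 4) := ⟨![2,1,0,3], ![2,1,0,3], by decide, by decide⟩
def pS03 : Equiv.Perm (Fin 4) := ⟨![3,1,2,0], ![3,1,2,0], by decide, by decide⟩
def pS12 : Equiv.Perm (Fin 4) := ⟨![0,2,1,3], ![0,2,1,3], by decide, by decide⟩
def pS13 : Equiv.Perm (Fin 4) := ⟨![0,3,2,1], ![0,3,2,1], by decide, by decide⟩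

lemma asym4_pCAB (f : Fin 8 → Fin 8 → Fin 8 → Fin 8 → ℝ) (i j k l : Fin 8) :
    asym4 (fun a b c d => f c a b d) i j k l = asym4 f i j k l := by
  have h := asym4_perm f pCAB i j k l
  rw [show (fun a b c d => f (![a,b,c,d] (pCAB 0)) (![a,b,c,d] (pCAB 1))
      (![a,b,c,d] (pCAB 2)) (![a,b,c,d] (pCAB 3))) = fun a b c d => f c a b d from rfl,
    show Equiv.Perm.sign pCAB = 1 from by decide] at h
  rw [h]; norm_num

lemma asym4_pDAB (f : Fin 8 → Fin 8 → Fin 8 → Fin 8 → ℝ) (i j k l : Fin 8) :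
    asym4 (fun a b c d => f d a b c) i j k l = -asym4 f i j k l := by
  have h := asym4_perm f pDAB i j k l
  rw [show (fun a b c d => f (![a,b,c,d] (pDAB 0)) (![a,b,c,d] (pDAB 1))
      (![a,b,c,d] (pDAB 2)) (![a,b,c,d] (pDAB 3))) = fun a b c d => f d a b c from rfl,
    show Equiv.Perm.sign pDAB = -1 from by decide] at h
  rw [h]; norm_num

lemma asym4_pBA (f : Fin 8 → Fin 8 → Fin 8 → Fin 8 → ℝ) (i j k l : Fin 8) :
    asym4 (fun a b c d => f b a c d) i j k l = -asym4 f i j k l := by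
  have h := asym4_perm f pBA i j k l
  rw [show (fun a b c d => f (![a,b,c,d] (pBA 0)) (![a,b,c,d] (pBA 1))
      (![a,b,c,d] (pBA 2)) (![a,b,c,d] (pBA 3))) = fun a b c d => f b a c d from rfl,
    show Equiv.Perm.sign pBA = -1 from by decide] at h
  rw [h]; norm_num

lemma asym4_pACD (f : Fin 8 → Fin 8 → Fin 8 → Fin 8 → ℝ) (i j k l : Fin 8) :
    asym4 (fun a b c d => f a c d b) i j k l = asym4 f i j k l := by
  have h := asym4_perm f pACD i j k l
  rw [show (fun a b c d => f (![a,b,c,d] (pACD 0)) (![a,b,c,d] (pACD 1))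
      (![a,b,c,d] (pACD 2)) (![a,b,c,d] (pACD 3))) = fun a b c d => f a c d b from rfl,
    show Equiv.Perm.sign pACD = 1 from by decide] at h
  rw [h]; norm_num

lemma asym4_pBCD (f : Fin 8 → Fin 8 → Fin 8 → Fin 8 → ℝ) (i j k l : Fin 8) :
    asym4 (fun a b c d => f b c d a) i j k l = -asym4 f i j k l := by
  have h := asym4_perm f pBCD i j k l
  rw [show (fun a b c d => f (![a,b,c,d] (pBCD 0)) (![a,b,c,d] (pBCD 1))
      (![a,b,c,d] (pBCD 2)) (![a,b,c,d] (pBCD 3))) = fun a b c d => f b c d a from rfl,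
    show Equiv.Perm.sign pBCD = -1 from by decide] at h
  rw [h]; norm_num

lemma asym4_pCD (f : Fin 8 → Fin 8 → Fin 8 → Fin 8 → ℝ) (i j k l : Fin 8) :
    asym4 (fun a b c d => f c d a b) i j k l = asym4 f i j k l := by
  have h := asym4_perm f pCD i j k l
  rw [show (fun a b c d => f (![a,b,c,d] (pCD 0)) (![a,b,c,d] (pCD 1))
      (![a,b,c,d] (pCD 2)) (![a,b,c,d] (pCD 3))) = fun a b c d => f c d a b from rfl,
    show Equiv.Perm.sign pCD = 1 from by decide] at h
  rw [h]; norm_num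

lemma asym4_zero02 (f : Fin 8 → Fin 8 → Fin 8 → Fin 8 → ℝ)
    (hsym : ∀ a b c d, f c b a d = f a b c d) (i j k l : Fin 8) :
    asym4 f i j k l = 0 := by
  have h := asym4_perm f pS02 i j k l
  rw [show (fun a b c d => f (![a,b,c,d] (pS02 0)) (![a,b,c,d] (pS02 1))
      (![a,b,c,d] (pS02 2)) (![a,b,c,d] (pS02 3))) = fun a b c d => f c b a d from rfl,
    show Equiv.Perm.sign pS02 = -1 from by decide,
    asym4_congr hsym] at h
  push_cast at h; linarith

lemma asym4_zero03 (f : Fin 8 → Fin 8 → Fin 8 → Fin 8 → ℝ)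
    (hsym : ∀ a b c d, f d b c a = f a b c d) (i j k l : Fin 8) :
    asym4 f i j k l = 0 := by
  have h := asym4_perm f pS03 i j k l
  rw [show (fun a b c d => f (![a,b,c,d] (pS03 0)) (![a,b,c,d] (pS03 1))
      (![a,b,c,d] (pS03 2)) (![a,b,c,d] (pS03 3))) = fun a b c d => f d b c a from rfl,
    show Equiv.Perm.sign pS03 = -1 from by decide,
    asym4_congr hsym] at h
  push_cast at h; linarith

lemma asym4_zero12 (f : Fin 8 → Fin 8 → Fin 8 → Fin 8 → ℝ)
    (hsym : ∀ a b c d, f a c b d = f a b c d) (i j k l : Fin 8) :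
    asym4 f i j k l = 0 := by
  have h := asym4_perm f pS12 i j k l
  rw [show (fun a b c d => f (![a,b,c,d] (pS12 0)) (![a,b,c,d] (pS12 1))
      (![a,b,c,d] (pS12 2)) (![a,b,c,d] (pS12 3))) = fun a b c d => f a c b d from rfl,
    show Equiv.Perm.sign pS12 = -1 from by decide,
    asym4_congr hsym] at h
  push_cast at h; linarith

lemma asym4_zero13 (f : Fin 8 → Fin 8 → Fin 8 → Fin 8 → ℝ)
    (hsym : ∀ a b c d, f a d c b = f a b c d) (i j k l : Fin 8) :
    asym4 f i j k l = 0 := by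
  have h := asym4_perm f pS13 i j k l
  rw [show (fun a b c d => f (![a,b,c,d] (pS13 0)) (![a,b,c,d] (pS13 1))
      (![a,b,c,d] (pS13 2)) (![a,b,c,d] (pS13 3))) = fun a b c d => f a d c b from rfl,
    show Equiv.Perm.sign pS13 = -1 from by decide,
    asym4_congr hsym] at h
  push_cast at h; linarith

lemma kron_comm_s11 (i j : Fin 8) : kron i j = kron j i := by
  simp [kron, eq_comm]

lemma asym4_neg (f : Fin 8 → Fin 8 → Fin 8 → Fin 8 → ℝ) (i j k l : Fin 8) :
    asym4 (fun w x y z => -f w x y z) i j k l = -asym4 f i j k l := by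
  have h := asym4_cmul (-1) f i j k l
  rw [show (fun w x y z => (-1 : ℝ) * f w x y z) = fun w x y z => -f w x y z from by
    funext w x y z; ring] at h
  rw [h]; ring

lemma alt4_K (h : Alt4 Φ) : Alt4 (Kmap Φ H) := by
  intro i j k l
  refine ⟨?_, ?_, ?_⟩
  · rw [Kmap, Kmap, ← Finset.sum_neg_distrib]
    refine Finset.sum_congr rfl fun p _ => ?_
    rw [show Φ p j i l = -Φ p i j l from sw23 h p j i l,
      show Φ p j i k = -Φ p i j k from sw23 h p j i k]
    ring
  · rw [Kmap, Kmap, ← Finset.sum_neg_distrib]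
    refine Finset.sum_congr rfl fun p _ => ?_
    rw [show Φ p k j l = -Φ p j k l from sw23 h p k j l,
      show Φ p i k j = -Φ p i j k from sw34 h p i k j]
    ring
  · rw [Kmap, Kmap, ← Finset.sum_neg_distrib]
    refine Finset.sum_congr rfl fun p _ => ?_
    rw [show Φ p j l k = -Φ p j k l from sw34 h p j l k,
      show Φ p i l k = -Φ p i k l from sw34 h p i l k]
    ring

lemma hKB : ∀ a b c d : Fin 8, Kmap Φ H a b c d =
    Bop Φ H a b c d - Bop Φ H b a c d + Bop Φ H c a b d - Bop Φ H d a b c := by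
  intro a b c d
  rw [Kmap, Bop, Bop, Bop, Bop, ← Finset.sum_sub_distrib, ← Finset.sum_add_distrib,
    ← Finset.sum_sub_distrib]

lemma asym4_B (h : Alt4 Φ) (i j k l : Fin 8) :
    asym4 (fun a b c d => Bop Φ H a b c d) i j k l = (1/4) * Kmap Φ H i j k l := by
  have h0 := asym4_alt (alt4_K h (H := H)) i j k l
  rw [asym4_congr hKB] at h0
  rw [asym4_sub, asym4_add, asym4_sub, asym4_pBA (fun a b c d => Bop Φ H a b c d),
    asym4_pCAB (fun a b c d => Bop Φ H a b c d),
    asym4_pDAB (fun a b c d => Bop Φ H a b c d)] at h0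
  linarith

lemma hCB (h : Alt4 Φ) : ∀ x a b c : Fin 8,
    Cop Φ H x a b c = -Bop Φ (fun u v => H v u) x a b c := by
  intro x a b c
  rw [Cop, Bop, ← Finset.sum_neg_distrib]
  refine Finset.sum_congr rfl fun p _ => ?_
  rw [show Φ a p b c = -Φ p a b c from sw12 h a p b c]
  ring

lemma asym4_C (h : Alt4 Φ) (i j k l : Fin 8) :
    asym4 (fun a b c d => Cop Φ H a b c d) i j k l
      = -((1/4) * Kmap Φ (fun u v => H v u) i j k l) := by
  rw [asym4_congr (fun a b c d => hCB h a b c d),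
    asym4_neg (fun a b c d => Bop Φ (fun u v => H v u) a b c d), asym4_B h]

lemma asym4_S (h : Alt4 Φ) (i j k l : Fin 8) :
    asym4 (Sterm Φ H) i j k l
      = (1/2) * Kmap Φ H i j k l + (1/2) * Kmap Φ (fun u v => H v u) i j k l
        - trH H * Φ i j k l := by
  have hs : ∀ a b c d : Fin 8, Sterm Φ H a b c d =
      kron a c * kron b d * trH H + kron a d * H c b + kron b c * H d a
        - kron a c * H d b - kron b d * H c a - kron a d * kron b c * trH H
        - kron a c * Pop Φ H b d + kron b c * Pop Φ H a d + Bop Φ H c a b d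
        + kron a d * Pop Φ H b c - kron b d * Pop Φ H a c - Bop Φ H d a b c
        - Cop Φ H a b c d + Cop Φ H b a c d - trH H * Φ a b c d := fun _ _ _ _ => rfl
  rw [asym4_congr hs]
  simp only [asym4_add, asym4_sub, asym4_cmul]
  rw [asym4_zero02 (fun a b c d => kron a c * kron b d * trH H)
      (fun a b c d => by beta_reduce; rw [kron_comm_s11 c a]) i j k l,
    asym4_zero03 (fun a b c d => kron a d * H c b)
      (fun a b c d => by beta_reduce; rw [kron_comm_s11 d a]) i j k l,
    asym4_zero12 (fun a b c d => kron b c * H d a)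
      (fun a b c d => by beta_reduce; rw [kron_comm_s11 c b]) i j k l,
    asym4_zero02 (fun a b c d => kron a c * H d b)
      (fun a b c d => by beta_reduce; rw [kron_comm_s11 c a]) i j k l,
    asym4_zero13 (fun a b c d => kron b d * H c a)
      (fun a b c d => by beta_reduce; rw [kron_comm_s11 d b]) i j k l,
    asym4_zero03 (fun a b c d => kron a d * kron b c * trH H)
      (fun a b c d => by beta_reduce; rw [kron_comm_s11 d a]) i j k l,
    asym4_zero02 (fun a b c d => kron a c * Pop Φ H b d)
      (fun a b c d => by beta_reduce; rw [kron_comm_s11 c a]) i j k l,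
    asym4_zero12 (fun a b c d => kron b c * Pop Φ H a d)
      (fun a b c d => by beta_reduce; rw [kron_comm_s11 c b]) i j k l,
    asym4_zero03 (fun a b c d => kron a d * Pop Φ H b c)
      (fun a b c d => by beta_reduce; rw [kron_comm_s11 d a]) i j k l,
    asym4_zero13 (fun a b c d => kron b d * Pop Φ H a c)
      (fun a b c d => by beta_reduce; rw [kron_comm_s11 d b]) i j k l,
    asym4_pCAB (Bop Φ H), asym4_pDAB (Bop Φ H), asym4_pBA (Cop Φ H),
    asym4_B h, asym4_C h, asym4_alt h]
  ring



/-- for every 8×8 real matrix H, `π₂₇(K(H)) = 0`. -/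
theorem pi27_K_eq_zero (Φ : Fin 8 → Fin 8 → Fin 8 → Fin 8 → ℝ)
    (hΦ : Alt4 Φ) (hCayley : Cayley Φ) :
    ∀ H : Fin 8 → Fin 8 → ℝ, ∀ i j k l,
      pi27 Φ (Kmap Φ H) i j k l = 0 := by
  intro H i j k l
  rw [pi27]
  rw [asym4_congr (fun a b c d => hA1 hΦ hCayley a b c d),
    asym4_congr (fun a b c d => hA2 hΦ hCayley a b c d), hT3 hΦ hCayley]
  simp only [asym4_add, asym4_sub, asym4_cmul]
  rw [asym4_pCAB (Cop Φ H), asym4_pDAB (Cop Φ H), asym4_pACD (Cop Φ H),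
    asym4_pBCD (Cop Φ H), asym4_pCD (Sterm Φ H),
    asym4_zero13 (fun a b c d => 6 * kron b d * H c a)
      (fun a b c d => by beta_reduce; rw [kron_comm_s11 d b]) i j k l,
    asym4_zero03 (fun a b c d => 6 * kron a d * H c b)
      (fun a b c d => by beta_reduce; rw [kron_comm_s11 d a]) i j k l,
    asym4_zero12 (fun a b c d => 6 * kron b c * H d a)
      (fun a b c d => by beta_reduce; rw [kron_comm_s11 c b]) i j k l,
    asym4_zero02 (fun a b c d => 6 * kron a c * H d b)
      (fun a b c d => by beta_reduce; rw [kron_comm_s11 c a]) i j k l,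
    asym4_pCAB (Bop Φ H), asym4_pDAB (Bop Φ H),
    asym4_B hΦ, asym4_C hΦ, asym4_S hΦ]
  ring
end
end Spin7
end
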